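/- arXiv:2107.05690 — 4 statements merged into one kernel-verified Lean document; each statement's English description precedes it below -/
import Mathlib

section
/- For every tollbooth instance on a cycle graph, there exists an item pricing p such that for every arrival order σ there is a tie-breaking choice t with Wel(p,σ,t) ≥ OPT/2. (The competitive ratio of item pricing with seller tie-breaking power on cycles is at most 2.) -/
/-!
Cut the cycle at an edge `e₀` avoided by the most valuable buyer of an optimal allocation `S`.
Since the paths of `S` are edge-disjoint, at most one buyer of `S` uses `e₀`, and her value is at
most that of the most valuable buyer, who survives the cut: the buyers of `S` avoiding `e₀` keep at
least half of OPT.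

With `e₀` priced at `∞`, the cycle becomes a line on which every other demand is an interval
`[A, B)` of edge positions. Let `F i` be the optimal welfare of the buyers whose intervals end by
`i`, and price position `r` at `F (r + 1) - F r`. An interval then costs `F B - F A ≥ v`, so nobody
buys strictly below value, while an exchange argument shows that along an optimal allocation `T` of
the line the price equals the value. Breaking ties in favour of `T`, exactly the buyers of `T`
purchase, whatever the arrival order.
-/

open scoped Classical NNReal ENNReal

noncomputable section

namespace Tollbooth

variable {V : Type*} [Fintype V] [DecidableEq V]

/-- Total price (in `ℝ≥0∞`) of a set of edges under an item pricing `p`. -/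
def price (p : Sym2 V → ℝ≥0∞) (s : Finset (Sym2 V)) : ℝ≥0∞ := ∑ e ∈ s, p e

/-- One step of the selling process: the state consists of the set of available edges together
with the set of buyers that have purchased so far; buyer `j` purchases exactly when all the
edges of her demand path are available and either the price is strictly below her value, or the
price equals her value and her tie-breaking bit `t j` is `true`. -/
def step {n : ℕ} (p : Sym2 V → ℝ≥0∞) (Q : Fin n → Finset (Sym2 V)) (v : Fin n → ℝ≥0)
    (t : Fin n → Bool) (st : Finset (Sym2 V) × Finset (Fin n)) (j : Fin n) :
    Finset (Sym2 V) × Finset (Fin n) :=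
  if Q j ⊆ st.1 ∧
      (price p (Q j) < (v j : ℝ≥0∞) ∨ (price p (Q j) = (v j : ℝ≥0∞) ∧ t j = true)) then
    (st.1 \ Q j, insert j st.2)
  else st

/-- The set of buyers who purchase, when buyers arrive in the order `σ 0, σ 1, …`,
starting from all edges of `G` being available. -/
def purchased {n : ℕ} (G : SimpleGraph V) (p : Sym2 V → ℝ≥0∞) (Q : Fin n → Finset (Sym2 V))
    (v : Fin n → ℝ≥0) (σ : Equiv.Perm (Fin n)) (t : Fin n → Bool) : Finset (Fin n) :=
  ((List.ofFn fun i => σ i).foldl (step p Q v t) (G.edgeFinset, ∅)).2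

/-- The welfare obtained by the item pricing `p` under arrival order `σ` and
tie-breaking choice `t`. -/
def Wel {n : ℕ} (G : SimpleGraph V) (p : Sym2 V → ℝ≥0∞) (Q : Fin n → Finset (Sym2 V))
    (v : Fin n → ℝ≥0) (σ : Equiv.Perm (Fin n)) (t : Fin n → Bool) : ℝ≥0 :=
  ∑ j ∈ purchased G p Q v σ t, v j

/-- The hindsight optimal welfare: the maximum total value of a set of buyers whose demand
paths are pairwise edge-disjoint. -/
def OPT {n : ℕ} (Q : Fin n → Finset (Sym2 V)) (v : Fin n → ℝ≥0) : ℝ≥0 :=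
  (Finset.univ.powerset.filter fun S : Finset (Fin n) =>
      (S : Set (Fin n)).Pairwise fun j k => Disjoint (Q j) (Q k)).sup
    fun S => ∑ j ∈ S, v j

/-- `s` is the (nonempty) edge set of a path of `G`. -/
def IsPathEdges (G : SimpleGraph V) (s : Finset (Sym2 V)) : Prop :=
  ∃ (a b : V) (W : G.Walk a b), W.IsPath ∧ W.edges ≠ [] ∧ s = W.edges.toFinset

/-- A tollbooth instance on `G`: at least one buyer, every buyer has positive value and
demands (the edge set of) a path of `G`. -/
def Instance {n : ℕ} (G : SimpleGraph V) (Q : Fin n → Finset (Sym2 V)) (v : Fin n → ℝ≥0) :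
    Prop :=
  1 ≤ n ∧ ∀ j, 0 < v j ∧ IsPathEdges G (Q j)

/-- A star: a tree all of whose edges share a common vertex. -/
def IsStar (G : SimpleGraph V) : Prop := G.IsTree ∧ ∃ c : V, ∀ e ∈ G.edgeSet, c ∈ e

/-- A spider: a tree with at most one vertex of degree at least `3`. -/
def IsSpider (G : SimpleGraph V) : Prop :=
  G.IsTree ∧ {w : V | 3 ≤ G.degree w}.Subsingleton

/-- A cycle graph: a connected graph in which every vertex has degree exactly `2`. -/
def IsCycleGraph (G : SimpleGraph V) : Prop := G.Connected ∧ ∀ w : V, G.degree w = 2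

/-- A path graph: a tree in which every vertex has degree at most `2`. -/
def IsPathGraph (G : SimpleGraph V) : Prop := G.IsTree ∧ ∀ w : V, G.degree w ≤ 2

end Tollbooth

open Finset SimpleGraph

namespace Tollbooth

section Packing

variable {ι α : Type*} (I : ι → Finset α) (v : ι → ℝ≥0)

def packValue (L : Finset ι) : ℝ≥0 :=
  (L.powerset.filter fun X : Finset ι => (X : Set ι).Pairwise fun j k => Disjoint (I j) (I k)).sup
    fun X => ∑ j ∈ X, v j

variable {I v}

lemma sum_le_packValue {L X : Finset ι} (hXL : X ⊆ L)
    (hX : (X : Set ι).Pairwise fun j k => Disjoint (I j) (I k)) :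
    ∑ j ∈ X, v j ≤ packValue I v L :=
  le_sup (f := fun X => ∑ j ∈ X, v j) (mem_filter.2 ⟨mem_powerset.2 hXL, hX⟩)

lemma exists_sum_eq_packValue (L : Finset ι) :
    ∃ X ⊆ L, (X : Set ι).Pairwise (fun j k => Disjoint (I j) (I k)) ∧
      ∑ j ∈ X, v j = packValue I v L := by
  obtain ⟨X, hX, hsum⟩ := exists_mem_eq_sup
    (L.powerset.filter fun X : Finset ι => (X : Set ι).Pairwise fun j k => Disjoint (I j) (I k))
    ⟨∅, by simp⟩ fun X => ∑ j ∈ X, v j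
  rw [mem_filter, mem_powerset] at hX
  exact ⟨X, hX.1, hX.2, hsum.symm⟩

lemma packValue_mono : Monotone (packValue I v) := fun _ _ hL =>
  sup_mono (filter_subset_filter _ (powerset_mono.2 hL))

end Packing

lemma OPT_eq_packValue {V : Type*} [DecidableEq V] {n : ℕ} (Q : Fin n → Finset (Sym2 V))
    (v : Fin n → ℝ≥0) :
    OPT Q v = packValue Q v univ := by
  unfold OPT packValue
  congr!

section Selling

variable {V : Type*} [Fintype V] [DecidableEq V] {n : ℕ} {G : SimpleGraph V}
  {p : Sym2 V → ℝ≥0∞} {Q : Fin n → Finset (Sym2 V)} {v : Fin n → ℝ≥0} {T : Finset (Fin n)}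

def available (G : SimpleGraph V) (Q : Fin n → Finset (Sym2 V)) (R : Finset (Fin n)) :
    Finset (Sym2 V) :=
  G.edgeFinset \ R.biUnion Q

variable (hp : ∀ j, (v j : ℝ≥0∞) ≤ price p (Q j)) (hpT : ∀ j ∈ T, price p (Q j) = v j)
  (hQT : ∀ j ∈ T, Q j ⊆ G.edgeFinset)
  (hT : (T : Set (Fin n)).Pairwise fun j k => Disjoint (Q j) (Q k))
include hp hpT hQT hT

lemma step_available {R : Finset (Fin n)} (hR : R ⊆ T) (j : Fin n) :
    step p Q v (fun j => decide (j ∈ T)) (available G Q R, R) j =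
      (available G Q (if j ∈ T then insert j R else R), if j ∈ T then insert j R else R) := by
  unfold step
  split_ifs with hbuy hj hj
  · simp only [available, biUnion_insert, sdiff_sdiff_left, sup_eq_union, union_comm]
  · simp only [not_lt.2 (hp j), false_or, decide_eq_true_eq] at hbuy
    exact absurd hbuy.2.2 hj
  · have hjR : j ∈ R := by
      by_contra hjR
      refine hbuy ⟨fun e he => mem_sdiff.2 ⟨hQT j hj he, ?_⟩, Or.inr ⟨hpT j hj, by simpa using hj⟩⟩
      simp only [mem_biUnion, not_exists, not_and]
      intro r hr her
      exact disjoint_left.1 (hT hj (hR hr) (by rintro rfl; exact hjR hr)) he her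
    rw [insert_eq_of_mem hjR]
  · rfl

lemma foldl_step_available (l : List (Fin n)) {R : Finset (Fin n)} (hR : R ⊆ T) :
    l.foldl (step p Q v fun j => decide (j ∈ T)) (available G Q R, R) =
      (available G Q (R ∪ T.filter (· ∈ l)), R ∪ T.filter (· ∈ l)) := by
  induction l generalizing R with
  | nil => simp
  | cons a l ih =>
    have hR' : (if a ∈ T then insert a R else R) ⊆ T := by
      split_ifs with ha
      exacts [insert_subset ha hR, hR]
    have hunion : (if a ∈ T then insert a R else R) ∪ T.filter (· ∈ l) =
        R ∪ T.filter (· ∈ a :: l) := by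
      ext x
      by_cases hx : x = a <;> split_ifs <;> simp_all
    rw [List.foldl_cons, step_available hp hpT hQT hT hR, ih hR', hunion]

theorem purchased_eq_of_tight (σ : Equiv.Perm (Fin n)) :
    purchased G p Q v σ (fun j => decide (j ∈ T)) = T := by
  have hstart : (G.edgeFinset, (∅ : Finset (Fin n))) = (available G Q ∅, ∅) := by
    simp [available]
  rw [purchased, hstart, foldl_step_available hp hpT hQT hT _ (empty_subset T)]
  ext j
  simp [List.mem_ofFn, σ.surjective j]

end Selling

lemma sum_Ico_tsub_of_monotone {M : Type*} [AddCommMonoid M] [PartialOrder M] [Sub M]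
    [OrderedSub M] [AddLeftMono M] [AddLeftReflectLE M] [ExistsAddOfLE M] {f : ℕ → M}
    (hf : Monotone f) {a b : ℕ} (hab : a ≤ b) :
    ∑ r ∈ Ico a b, (f (r + 1) - f r) = f b - f a := by
  induction b, hab using Nat.le_induction with
  | base => rw [Ico_self, sum_empty, tsub_eq_of_eq_add (zero_add _).symm]
  | succ b hab ih =>
    rw [sum_Ico_succ_top hab, ih, add_comm]
    exact tsub_add_tsub_cancel (hf b.le_succ) (hf hab)

lemma le_or_le_of_disjoint_Ico {α : Type*} [LinearOrder α] [LocallyFiniteOrder α] {a b c d : α}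
    (hab : a < b) (hcd : c < d) (h : Disjoint (Ico a b) (Ico c d)) : b ≤ c ∨ d ≤ a := by
  rw [← disjoint_coe, coe_Ico, coe_Ico, Set.Ico_disjoint_Ico, min_le_iff, le_max_iff,
    le_max_iff] at h
  rcases h with (h | h) | (h | h)
  exacts [absurd h hab.not_ge, Or.inl h, Or.inr h, absurd h hcd.not_ge]

section IntervalPricing

variable {ι : Type*} (L : Finset ι) (A B : ι → ℕ) (v : ι → ℝ≥0)

def prefixValue (i : ℕ) : ℝ≥0 :=
  packValue (fun j => Ico (A j) (B j)) v (L.filter (B · ≤ i))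

variable {L A B v}

lemma prefixValue_mono : Monotone (prefixValue L A B v) := fun _ _ hii' =>
  packValue_mono (monotone_filter_right L fun _ _ h => h.trans hii')

lemma prefixValue_add_le {j : ι} (hj : j ∈ L) (hAB : A j < B j) :
    prefixValue L A B v (A j) + v j ≤ prefixValue L A B v (B j) := by
  obtain ⟨X, hXL, hX, hsum⟩ := exists_sum_eq_packValue (I := fun j => Ico (A j) (B j)) (v := v)
    (L.filter (B · ≤ A j))
  have hjX : j ∉ X := fun h => (mem_filter.1 (hXL h)).2.not_gt hAB
  rw [prefixValue, ← hsum, add_comm, ← sum_insert hjX]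
  refine sum_le_packValue (insert_subset (mem_filter.2 ⟨hj, le_rfl⟩)
    (hXL.trans (monotone_filter_right L fun _ _ h => h.trans hAB.le))) ?_
  rw [coe_insert]
  refine hX.insert fun k hk _ => ?_
  have hk : Ico (A k) (B k) ⊆ Ico (A k) (A j) := Ico_subset_Ico le_rfl (mem_filter.1 (hXL hk)).2
  have hdisj := (Ico_disjoint_Ico_consecutive (A k) (A j) (B j)).mono_left hk
  exact ⟨hdisj.symm, hdisj⟩

variable (hAB : ∀ j ∈ L, A j < B j) {T : Finset ι} (hTL : T ⊆ L)
  (hT : (T : Set ι).Pairwise fun j k => Disjoint (Ico (A j) (B j)) (Ico (A k) (B k)))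
include hAB hTL hT

lemma prefixValue_add_sum_le (i : ℕ) :
    prefixValue L A B v i + ∑ j ∈ T.filter (i ≤ A ·), v j ≤
      packValue (fun j => Ico (A j) (B j)) v L := by
  obtain ⟨X, hXL, hX, hsum⟩ := exists_sum_eq_packValue (I := fun j => Ico (A j) (B j)) (v := v)
    (L.filter (B · ≤ i))
  have hsep : ∀ k ∈ X, ∀ l ∈ T.filter (i ≤ A ·), Disjoint (Ico (A k) (B k)) (Ico (A l) (B l)) :=
    fun k hk l hl => (Ico_disjoint_Ico_consecutive (A k) i (B l)).mono
      (Ico_subset_Ico le_rfl (mem_filter.1 (hXL hk)).2) (Ico_subset_Ico (mem_filter.1 hl).2 le_rfl)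
  have hXT : Disjoint X (T.filter (i ≤ A ·)) := disjoint_left.2 fun k hk hk' =>
    ((mem_filter.1 (hXL hk)).2.trans (mem_filter.1 hk').2).not_gt (hAB k (mem_filter.1 (hXL hk)).1)
  rw [prefixValue, ← hsum, ← sum_union hXT]
  refine sum_le_packValue (union_subset (hXL.trans (filter_subset _ L))
    ((filter_subset _ T).trans hTL)) ?_
  rw [coe_union, Set.pairwise_union]
  exact ⟨hX, hT.mono (coe_subset.2 (filter_subset _ T)), fun k hk l hl _ =>
    ⟨hsep k hk l hl, (hsep k hk l hl).symm⟩⟩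

lemma filter_not_le_eq_insert {j : ι} (hj : j ∈ T) :
    T.filter (¬ B j ≤ A ·) = insert j (T.filter (B · ≤ A j)) := by
  have hjL := hAB j (hTL hj)
  ext k
  simp only [mem_filter, mem_insert, not_le]
  constructor
  · rintro ⟨hk, hkj⟩
    by_cases hkj' : k = j
    · exact Or.inl hkj'
    · have hkL := hAB k (hTL hk)
      rcases le_or_le_of_disjoint_Ico hkL hjL (hT hk hj hkj') with h | h
      exacts [Or.inr ⟨hk, h⟩, absurd h hkj.not_ge]
  · rintro (rfl | ⟨hk, hkj⟩)
    exacts [⟨hj, hjL⟩, ⟨hk, (hAB k (hTL hk)).trans_le hkj |>.trans hjL⟩]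

lemma prefixValue_le_add
    (hTopt : ∑ j ∈ T, v j = packValue (fun j => Ico (A j) (B j)) v L) {j : ι} (hj : j ∈ T) :
    prefixValue L A B v (B j) ≤ prefixValue L A B v (A j) + v j := by
  have hjT : j ∉ T.filter (B · ≤ A j) := fun h => (mem_filter.1 h).2.not_gt (hAB j (hTL hj))
  have hpre : ∑ k ∈ T.filter (B · ≤ A j), v k ≤ prefixValue L A B v (A j) :=
    sum_le_packValue (monotone_filter_left _ hTL) (hT.mono (coe_subset.2 (filter_subset _ T)))
  have h := prefixValue_add_sum_le hAB hTL hT (v := v) (B j)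
  rw [← hTopt, ← sum_filter_add_sum_filter_not T (B j ≤ A ·), add_comm (∑ k ∈ _, v k),
    filter_not_le_eq_insert hAB hTL hT hj, sum_insert hjT] at h
  calc prefixValue L A B v (B j) ≤ v j + ∑ k ∈ T.filter (B · ≤ A j), v k :=
        le_of_add_le_add_right h
    _ ≤ prefixValue L A B v (A j) + v j := by rw [add_comm]; gcongr

end IntervalPricing

theorem exists_interval_pricing {ι : Type*} (L : Finset ι) {A B : ι → ℕ}
    (hAB : ∀ j ∈ L, A j < B j) (v : ι → ℝ≥0) :
    ∃ q : ℕ → ℝ≥0, ∃ T ⊆ L,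
      (T : Set ι).Pairwise (fun j k => Disjoint (Ico (A j) (B j)) (Ico (A k) (B k))) ∧
      ∑ j ∈ T, v j = packValue (fun j => Ico (A j) (B j)) v L ∧
      (∀ j ∈ L, v j ≤ ∑ r ∈ Ico (A j) (B j), q r) ∧
      ∀ j ∈ T, ∑ r ∈ Ico (A j) (B j), q r = v j := by
  set F := prefixValue L A B v
  obtain ⟨T, hTL, hT, hTopt⟩ := exists_sum_eq_packValue (I := fun j => Ico (A j) (B j)) (v := v) L
  have htele : ∀ j ∈ L, ∑ r ∈ Ico (A j) (B j), (F (r + 1) - F r) = F (B j) - F (A j) :=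
    fun j hj => sum_Ico_tsub_of_monotone prefixValue_mono (hAB j hj).le
  refine ⟨fun r => F (r + 1) - F r, T, hTL, hT, hTopt, fun j hj => ?_, fun j hj => ?_⟩
  · rw [htele j hj]
    exact le_tsub_of_add_le_left (prefixValue_add_le hj (hAB j hj))
  · rw [htele j (hTL hj)]
    exact tsub_eq_of_eq_add_rev ((prefixValue_le_add hAB hTL hT hTopt hj).antisymm
      (prefixValue_add_le (hTL hj) (hAB j (hTL hj))))

lemma Reachable.mem_of_adj_mem {V : Type*} {G : SimpleGraph V} {S : Set V}
    (hS : ∀ a b, G.Adj a b → a ∈ S → b ∈ S) {a b : V} (h : G.Reachable a b) (ha : a ∈ S) :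
    b ∈ S := by
  rw [reachable_iff_reflTransGen] at h
  induction h with
  | refl => exact ha
  | tail _ hbc ih => exact hS _ _ hbc ih

section CycleGraph

variable {V : Type*} [Fintype V] {G : SimpleGraph V}

lemma eq_or_eq_of_adj_of_degree_eq_two {c a b d : V} (h : G.degree c = 2) (ha : G.Adj c a)
    (hb : G.Adj c b) (hab : a ≠ b) (hd : G.Adj c d) : d = a ∨ d = b := by
  have hN : G.neighborFinset c = {a, b} :=
    (eq_of_subset_of_card_le (by simp [insert_subset_iff, ha, hb])
      (by rw [G.card_neighborFinset_eq_degree c, h, card_pair hab])).symm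
  simpa [hN] using (G.mem_neighborFinset c d).2 hd

variable (G) in
def otherNeighbor (p c : V) : V :=
  if h : ∃ q, G.Adj c q ∧ q ≠ p then h.choose else p

lemma otherNeighbor_spec {p c : V} (h : G.degree c = 2) :
    G.Adj c (otherNeighbor G p c) ∧ otherNeighbor G p c ≠ p := by
  have hex : ∃ q, G.Adj c q ∧ q ≠ p := by
    obtain ⟨q, hq, hqp⟩ := exists_mem_ne (by rw [G.card_neighborFinset_eq_degree c, h]; omega) p
    exact ⟨q, (G.mem_neighborFinset c q).1 hq, hqp⟩
  rw [otherNeighbor, dif_pos hex]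
  exact hex.choose_spec

variable (G) in
def cycleSeq (u w : V) : ℕ → V
  | 0 => u
  | 1 => w
  | k + 2 => otherNeighbor G (cycleSeq u w k) (cycleSeq u w (k + 1))

section Period

variable {u w : V} (hdeg : ∀ x, G.degree x = 2) (huw : G.Adj u w)
include hdeg

lemma cycleSeq_add_two_ne (k : ℕ) : cycleSeq G u w (k + 2) ≠ cycleSeq G u w k :=
  (otherNeighbor_spec (hdeg _)).2

include huw

lemma cycleSeq_adj_succ : ∀ k, G.Adj (cycleSeq G u w k) (cycleSeq G u w (k + 1))
  | 0 => huw
  | _ + 1 => (otherNeighbor_spec (hdeg _)).1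

lemma eq_or_eq_of_adj_cycleSeq_succ {k : ℕ} {b : V} (hb : G.Adj (cycleSeq G u w (k + 1)) b) :
    b = cycleSeq G u w k ∨ b = cycleSeq G u w (k + 2) :=
  eq_or_eq_of_adj_of_degree_eq_two (hdeg _) (cycleSeq_adj_succ hdeg huw k).symm
    (cycleSeq_adj_succ hdeg huw (k + 1)) (cycleSeq_add_two_ne hdeg k).symm hb

theorem exists_cycleSeq_period : ∃ M, 3 ≤ M ∧ cycleSeq G u w M = u ∧
    ∀ i < M, ∀ j < M, cycleSeq G u w i = cycleSeq G u w j → i = j := by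
  set x := cycleSeq G u w
  have hrep : ∃ k, ∃ i < k, x i = x k := by
    obtain ⟨i, j, hij, h⟩ := Finite.exists_ne_map_eq_of_infinite x
    rcases hij.lt_or_gt with hlt | hlt
    exacts [⟨j, i, hlt, h⟩, ⟨i, j, hlt, h.symm⟩]
  obtain ⟨i, hiM, hi⟩ := Nat.find_spec hrep
  set M := Nat.find hrep
  have hinj : ∀ i < M, ∀ j < M, x i = x j → i = j := by
    intro i hi j hj h
    by_contra hne
    rcases Ne.lt_or_gt hne with hlt | hlt
    exacts [Nat.find_min hrep hj ⟨i, hlt, h⟩, Nat.find_min hrep hi ⟨j, hlt, h.symm⟩]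
  clear_value M
  have hloop : ∀ k, x (k + 1) ≠ x k := fun k h => (cycleSeq_adj_succ hdeg huw k).ne h.symm
  -- Were the first repeat `x M = x (i + 1)` not a return to the start, `x (M - 1)` would be a
  -- third neighbour of `x (i + 1)`, besides `x i` and `x (i + 2)`.
  have hi0 : i = 0 := by
    obtain _ | i := i
    · rfl
    exfalso
    obtain ⟨M, rfl⟩ : ∃ M', M = M' + 1 := ⟨M - 1, by omega⟩
    have hadj : G.Adj (x (i + 1)) (x M) := hi ▸ (cycleSeq_adj_succ hdeg huw M).symm
    rcases eq_or_eq_of_adj_cycleSeq_succ hdeg huw hadj with h | h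
    · exact absurd (hinj M (by omega) i (by omega) h) (by omega)
    · rcases (show M = i + 1 ∨ M = i + 2 ∨ i + 3 < M + 1 by omega) with rfl | rfl | h3
      · exact hloop _ hi.symm
      · exact cycleSeq_add_two_ne hdeg (i + 1) hi.symm
      · exact absurd (hinj M (by omega) (i + 2) (by omega) h) (by omega)
  subst hi0
  refine ⟨M, ?_, hi.symm, hinj⟩
  by_contra! hM
  interval_cases M
  · exact hloop 0 hi.symm
  · exact cycleSeq_add_two_ne hdeg 0 hi.symm

end Period

/-- Walking around the cycle from `w` away from `u`, the index along the walk changes by one across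
every edge except the closing edge `s(u, w)`. -/
theorem exists_enumeration_of_adj (hdeg : ∀ x, G.degree x = 2) {u w : V} (huw : G.Adj u w) :
    ∃ M, ∃ x : ℕ → V, 0 < M ∧ x 0 = w ∧ (∀ i < M, ∀ j < M, x i = x j → i = j) ∧
      ∀ k < M, ∀ b, G.Adj (x k) b →
        ∃ l < M, b = x l ∧ (l = k + 1 ∨ k = l + 1 ∨ s(x k, b) = s(u, w)) := by
  obtain ⟨w', hww', hw'u⟩ : ∃ w', G.Adj w w' ∧ w' ≠ u := ⟨_, otherNeighbor_spec (hdeg w)⟩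
  set x := cycleSeq G w w'
  obtain ⟨M, hM3, hxM, hinj⟩ := exists_cycleSeq_period hdeg hww'
  have hlast : G.Adj w (x (M - 1)) := by
    simpa [hxM, show M - 1 + 1 = M by omega] using (cycleSeq_adj_succ hdeg hww' (M - 1)).symm
  have hnbr₀ : ∀ b, G.Adj w b → b = w' ∨ b = x (M - 1) :=
    fun b => eq_or_eq_of_adj_of_degree_eq_two (hdeg w) hww' hlast
      (fun h => absurd (hinj 1 (by omega) (M - 1) (by omega) h) (by omega))
  have hu : u = x (M - 1) := (hnbr₀ u huw.symm).resolve_left hw'u.symm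
  refine ⟨M, x, by omega, rfl, hinj, ?_⟩
  rintro (_ | k) hk b hb
  · rcases hnbr₀ b hb with rfl | rfl
    · exact ⟨1, by omega, rfl, Or.inl rfl⟩
    · exact ⟨M - 1, by omega, rfl, Or.inr (Or.inr (by rw [← hu, Sym2.eq_swap]; rfl))⟩
  · rcases eq_or_eq_of_adj_cycleSeq_succ hdeg hww' hb with rfl | rfl
    · exact ⟨k, by omega, rfl, Or.inr (Or.inl rfl)⟩
    · rcases (show k + 2 < M ∨ k + 2 = M by omega) with hkM | hkM
      · exact ⟨k + 2, hkM, rfl, Or.inl rfl⟩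
      · refine ⟨0, by omega, by rw [hkM, hxM]; rfl, Or.inr (Or.inr ?_)⟩
        rw [hu, show M - 1 = k + 1 by omega, hkM, hxM]

theorem exists_coord_of_isCycleGraph (hG : IsCycleGraph G) {e₀ : Sym2 V} (he₀ : e₀ ∈ G.edgeSet) :
    ∃ c : V → ℕ, Function.Injective c ∧
      ∀ a b, (G.deleteEdges {e₀}).Adj a b → c b = c a + 1 ∨ c a = c b + 1 := by
  induction e₀ using Sym2.ind with | _ u w =>
  obtain ⟨M, x, hM, hx0, hinj, hnbr⟩ := exists_enumeration_of_adj hG.2 he₀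
  have hsurj : ∀ b, ∃ l < M, x l = b := fun b =>
    Reachable.mem_of_adj_mem (S := {b | ∃ l < M, x l = b})
      (fun _ _ hab ⟨l, hl, hla⟩ => (hnbr l hl _ (hla ▸ hab)).imp fun _ h => ⟨h.1, h.2.1.symm⟩)
      (hG.1 w b) ⟨0, hM, hx0⟩
  choose c hcM hxc using hsurj
  refine ⟨c, Function.LeftInverse.injective hxc, fun a b hab => ?_⟩
  rw [deleteEdges_adj, Set.mem_singleton_iff] at hab
  obtain ⟨l, hl, rfl, hcases⟩ := hnbr (c a) (hcM a) b (by rw [hxc]; exact hab.1)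
  rw [hxc] at hcases
  rw [hinj _ (hcM _) l hl (hxc _)]
  rcases hcases with h | h | h
  exacts [Or.inl h, Or.inr h, absurd h hab.2]

end CycleGraph

section Line

variable {V : Type*} {H : SimpleGraph V} {c : V → ℕ}

def edgeRank (c : V → ℕ) : Sym2 V → ℕ :=
  Sym2.lift ⟨fun a b => min (c a) (c b), fun _ _ => min_comm _ _⟩

variable (hc : ∀ a b, H.Adj a b → c b = c a + 1 ∨ c a = c b + 1)
include hc

lemma edgeRank_injOn (hinj : Function.Injective c) : Set.InjOn (edgeRank c) H.edgeSet := by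
  intro e he e' he' h
  induction e using Sym2.ind with | _ a b =>
  induction e' using Sym2.ind with | _ a' b' =>
  have := hc a b he
  have := hc a' b' he'
  simp only [edgeRank, Sym2.lift_mk] at h
  rcases (show c a = c a' ∧ c b = c b' ∨ c a = c b' ∧ c b = c a' by omega) with ⟨h1, h2⟩ | ⟨h1, h2⟩
  · rw [hinj h1, hinj h2]
  · rw [hinj h1, hinj h2, Sym2.eq_swap]

lemma exists_image_edgeRank_eq_Ico [DecidableEq V] {a b : V} (W : H.Walk a b) :
    ∃ m M, m ≤ c a ∧ c a ≤ M ∧ W.edges.toFinset.image (edgeRank c) = Ico m M := by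
  induction W with
  | nil => exact ⟨_, _, le_rfl, le_rfl, by simp⟩
  | @cons a a' b h W ih =>
    obtain ⟨m, M, hm, hM, hW⟩ := ih
    have := hc a a' h
    refine ⟨min m (min (c a) (c a')), max M (c a), by omega, by omega, ?_⟩
    rw [Walk.edges_cons, List.toFinset_cons, image_insert, hW]
    ext r
    simp only [edgeRank, Sym2.lift_mk, mem_insert, mem_Ico]
    omega

end Line

lemma sum_le_two_mul_sum_filter_notMem {ι α : Type*} [DecidableEq α] {Q : ι → Finset α}
    {v : ι → ℝ≥0} {S : Finset ι} (hS : (S : Set ι).Pairwise fun j k => Disjoint (Q j) (Q k))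
    {js : ι} (hjs : js ∈ S) (hmax : ∀ j ∈ S, v j ≤ v js) {e : α} (he : e ∉ Q js) :
    ∑ j ∈ S, v j ≤ 2 * ∑ j ∈ S.filter (e ∉ Q ·), v j := by
  have hcard : (S.filter (e ∈ Q ·)).card ≤ 1 := card_le_one.2 fun j hj k hk => by
    rw [mem_filter] at hj hk
    by_contra hjk
    exact disjoint_left.1 (hS hj.1 hk.1 hjk) hj.2 hk.2
  have hrest : ∑ j ∈ S.filter (e ∈ Q ·), v j ≤ v js :=
    calc _ ≤ (S.filter (e ∈ Q ·)).card • v js :=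
          sum_le_card_nsmul _ _ _ fun j hj => hmax j (mem_filter.1 hj).1
      _ ≤ 1 • v js := by gcongr
      _ = v js := one_nsmul _
  have hjs' : v js ≤ ∑ j ∈ S.filter (e ∉ Q ·), v j :=
    single_le_sum (fun j _ => zero_le) (mem_filter.2 ⟨hjs, he⟩)
  rw [← sum_filter_not_add_sum_filter S (e ∈ Q ·), two_mul]
  exact add_le_add le_rfl (hrest.trans hjs')

section Paths

variable {V : Type*} [DecidableEq V] {G : SimpleGraph V} {s : Finset (Sym2 V)}

lemma IsPathEdges.subset_edgeSet (hs : IsPathEdges G s) : ∀ e ∈ s, e ∈ G.edgeSet := by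
  obtain ⟨a, b, W, -, -, rfl⟩ := hs
  exact fun e he => W.edges_subset_edgeSet (List.mem_toFinset.1 he)

lemma IsPathEdges.exists_notMem [Fintype V] (hdeg : ∀ w, G.degree w = 2) (hs : IsPathEdges G s) :
    ∃ e ∈ G.edgeSet, e ∉ s := by
  obtain ⟨a, b, W, hW, -, rfl⟩ := hs
  have hE : #G.edgeFinset = Fintype.card V := by
    have := G.sum_degrees_eq_twice_card_edges
    simp only [hdeg, sum_const, card_univ, smul_eq_mul] at this
    omega
  have hlt : #W.edges.toFinset < #G.edgeFinset :=
    calc _ ≤ W.edges.length := List.toFinset_card_le _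
      _ = W.length := W.length_edges
      _ < _ := hE ▸ hW.length_lt
  obtain ⟨e, he, hes⟩ := exists_mem_notMem_of_card_lt_card hlt
  exact ⟨e, mem_edgeFinset.1 he, hes⟩

lemma IsPathEdges.exists_image_edgeRank_eq_Ico {H : SimpleGraph V} {c : V → ℕ}
    (hc : ∀ a b, H.Adj a b → c b = c a + 1 ∨ c a = c b + 1) (hs : IsPathEdges G s)
    (hsH : ∀ e ∈ s, e ∈ H.edgeSet) : ∃ A B, A < B ∧ s.image (edgeRank c) = Ico A B := by
  obtain ⟨a, b, W, -, hne, rfl⟩ := hs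
  obtain ⟨m, M, -, -, h⟩ := exists_image_edgeRank_eq_Ico hc
    (W.transfer H fun e he => hsH e (List.mem_toFinset.2 he))
  rw [Walk.edges_transfer] at h
  exact ⟨m, M, nonempty_Ico.1 (h ▸ (List.toFinset_nonempty_iff _ |>.2 hne).image _), h⟩

end Paths

lemma disjoint_image_iff_of_injOn {α β : Type*} [DecidableEq β] {f : α → β} {u : Set α}
    (hf : Set.InjOn f u) {s t : Finset α} (hs : ↑s ⊆ u) (ht : ↑t ⊆ u) :
    Disjoint (s.image f) (t.image f) ↔ Disjoint s t := by
  refine ⟨Disjoint.of_image_finset, fun h => ?_⟩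
  rw [← disjoint_coe, coe_image, coe_image]
  exact (disjoint_coe.2 h).image hf hs ht

section CutPricing

variable {V : Type*} [DecidableEq V]

def cutPricing (e₀ : Sym2 V) (c : V → ℕ) (q : ℕ → ℝ≥0) (e : Sym2 V) : ℝ≥0∞ :=
  if e = e₀ then ⊤ else q (edgeRank c e)

lemma price_cutPricing_of_mem {e₀ : Sym2 V} {c : V → ℕ} {q : ℕ → ℝ≥0} {s : Finset (Sym2 V)}
    (h : e₀ ∈ s) : price (cutPricing e₀ c q) s = ⊤ :=
  ENNReal.sum_eq_top.2 ⟨e₀, h, if_pos rfl⟩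

lemma price_cutPricing_of_notMem {e₀ : Sym2 V} {c : V → ℕ} {q : ℕ → ℝ≥0} {s : Finset (Sym2 V)}
    (h : e₀ ∉ s) (hinj : Set.InjOn (edgeRank c) s) :
    price (cutPricing e₀ c q) s = ((∑ r ∈ s.image (edgeRank c), q r : ℝ≥0) : ℝ≥0∞) := by
  rw [sum_image hinj, ENNReal.ofNNReal_finsetSum, price]
  exact sum_congr rfl fun e he => if_neg (ne_of_mem_of_not_mem he h)

end CutPricing

theorem exists_tight_pricing_of_line {V ι : Type*} [DecidableEq V] [Fintype ι]
    {G : SimpleGraph V} {Q : ι → Finset (Sym2 V)} (hQ : ∀ j, IsPathEdges G (Q j)) (v : ι → ℝ≥0)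
    {e₀ : Sym2 V} {c : V → ℕ} (hcinj : Function.Injective c)
    (hc : ∀ a b, (G.deleteEdges {e₀}).Adj a b → c b = c a + 1 ∨ c a = c b + 1) :
    ∃ p : Sym2 V → ℝ≥0∞, ∃ T : Finset ι, (∀ j, (v j : ℝ≥0∞) ≤ price p (Q j)) ∧
      (∀ j ∈ T, price p (Q j) = v j) ∧
      (T : Set ι).Pairwise (fun j k => Disjoint (Q j) (Q k)) ∧
      packValue Q v (univ.filter (e₀ ∉ Q ·)) ≤ ∑ j ∈ T, v j := by
  set L := univ.filter (e₀ ∉ Q ·)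
  have hQH : ∀ j ∈ L, ∀ e ∈ Q j, e ∈ (G.deleteEdges {e₀}).edgeSet := fun j hj e he => by
    rw [edgeSet_deleteEdges]
    exact ⟨(hQ j).subset_edgeSet e he,
      fun h => (mem_filter.1 hj).2 (Set.mem_singleton_iff.1 h ▸ he)⟩
  choose! A B hAB hImg using fun j hj => (hQ j).exists_image_edgeRank_eq_Ico hc (hQH j hj)
  obtain ⟨q, T, hTL, hT, hTopt, hle, heq⟩ := exists_interval_pricing L hAB v
  have hprice : ∀ j ∈ L, price (cutPricing e₀ c q) (Q j) = ∑ r ∈ Ico (A j) (B j), q r :=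
    fun j hj => by
      rw [price_cutPricing_of_notMem (mem_filter.1 hj).2
        ((edgeRank_injOn hc hcinj).mono (hQH j hj)), hImg j hj]
  have hdisj : ∀ j ∈ L, ∀ k ∈ L,
      Disjoint (Ico (A j) (B j)) (Ico (A k) (B k)) ↔ Disjoint (Q j) (Q k) := fun j hj k hk => by
    rw [← hImg j hj, ← hImg k hk]
    exact disjoint_image_iff_of_injOn (edgeRank_injOn hc hcinj) (hQH j hj) (hQH k hk)
  refine ⟨cutPricing e₀ c q, T, fun j => ?_, fun j hj => by rw [hprice j (hTL hj), heq j hj],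
    fun j hj k hk hjk => (hdisj j (hTL hj) k (hTL hk)).1 (hT hj hk hjk), ?_⟩
  · by_cases hj : j ∈ L
    · rw [hprice j hj]
      exact_mod_cast hle j hj
    · rw [price_cutPricing_of_mem (by simpa [L] using hj)]
      exact le_top
  · obtain ⟨X, hXL, hX, hXsum⟩ := exists_sum_eq_packValue (I := Q) (v := v) L
    rw [← hXsum, hTopt]
    exact sum_le_packValue hXL fun j hj k hk hjk => (hdisj j (hXL hj) k (hXL hk)).2 (hX hj hk hjk)

end Tollbooth

open Tollbooth in
/-- For every tollbooth instance on a cycle graph, there exists an item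
pricing `p` such that for every arrival order `σ` there is a tie-breaking choice `t` with
`Wel(p,σ,t) ≥ OPT/2`. -/
theorem cycle_gap_le_two {V : Type*} [Fintype V] [DecidableEq V]
    (G : SimpleGraph V) (hG : Tollbooth.IsCycleGraph G)
    {n : ℕ} (Q : Fin n → Finset (Sym2 V)) (v : Fin n → ℝ≥0)
    (hI : Tollbooth.Instance G Q v) :
    ∃ p : Sym2 V → ℝ≥0∞, ∀ σ : Equiv.Perm (Fin n), ∃ t : Fin n → Bool,
      Tollbooth.OPT Q v / 2 ≤ Tollbooth.Wel G p Q v σ t := by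
  have hQ j : IsPathEdges G (Q j) := (hI.2 j).2
  obtain ⟨S, -, hS, hSopt⟩ := exists_sum_eq_packValue (I := Q) (v := v) univ
  rw [OPT_eq_packValue, ← hSopt]
  rcases S.eq_empty_or_nonempty with rfl | hSne
  · exact ⟨0, fun _ => ⟨fun _ => false, by simp⟩⟩
  obtain ⟨js, hjs, hmax⟩ := S.exists_max_image v hSne
  obtain ⟨e₀, he₀, he₀js⟩ := (hQ js).exists_notMem hG.2
  obtain ⟨c, hcinj, hc⟩ := exists_coord_of_isCycleGraph hG he₀
  obtain ⟨p, T, hp, hpT, hT, hTopt⟩ := exists_tight_pricing_of_line hQ v hcinj hc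
  refine ⟨p, fun σ => ⟨fun j => decide (j ∈ T), ?_⟩⟩
  rw [Wel, purchased_eq_of_tight hp hpT
    (fun j _ e he => mem_edgeFinset.2 ((hQ j).subset_edgeSet e he)) hT σ, div_le_iff₀ two_pos]
  calc ∑ j ∈ S, v j ≤ 2 * ∑ j ∈ S.filter (e₀ ∉ Q ·), v j :=
        sum_le_two_mul_sum_filter_notMem hS hjs hmax he₀js
    _ ≤ 2 * ∑ j ∈ T, v j := by
      gcongr 2 * ?_
      exact (sum_le_packValue (filter_subset_filter _ (subset_univ S))
        (hS.mono (coe_subset.2 (filter_subset _ S)))).trans hTopt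
    _ = (∑ j ∈ T, v j) * 2 := mul_comm _ _
end
end

section
/- There exists a tollbooth instance on a path graph with three edges and four buyers, with OPT = 3, such that for every item pricing p there exist an arrival order σ and a tie-breaking choice t with Wel(p,σ,t) ≤ 2. (When the seller has no tie-breaking power, no item pricing on this path instance achieves worst-case welfare more than (2/3)·OPT; concretely, the instance is a path with edges e1,e2,e3 in this order, buyer 1 demanding {e1} with value 1, buyer 2 demanding {e3} with value 1, buyer 3 demanding {e1,e2} with value 2, and buyer 4 demanding {e2,e3} with value 2.) -/
open scoped Classical NNReal ENNReal

noncomputable section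

/-!
The adversary always breaks ties against the seller; write `a, b, c` for the prices of
`e1, e2, e3`. If `a < 1` and `c < 1`, the two single-edge buyers arrive first, buy, and block
both two-edge buyers. If one two-edge buyer strictly accepts while the single-edge buyer on the
opposite end does not (say `a + b < 2` and `c ≥ 1`), she arrives first and blocks every other
buyer who would accept. In the remaining case `a + b ≥ 2` and `b + c ≥ 2`, so neither two-edge
buyer ever buys. Each time the welfare is at most `2`. On the other hand `OPT = 3`: every value
is at most the number of edges demanded, the path has three edges, and `{e1}, {e2, e3}` attains
it.
-/

namespace Tollbooth

open Finset SimpleGraph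

section Selling

variable {V : Type*} {n : ℕ}

-- The price condition of `step`, without the availability of the edges.
def Accepts (p : Sym2 V → ℝ≥0∞) (Q : Fin n → Finset (Sym2 V)) (v : Fin n → ℝ≥0)
    (t : Fin n → Bool) (j : Fin n) : Prop :=
  price p (Q j) < v j ∨ (price p (Q j) = v j ∧ t j = true)

def IsFeasibleState [DecidableEq V] (Q : Fin n → Finset (Sym2 V))
    (st : Finset (Sym2 V) × Finset (Fin n)) : Prop :=
  (∀ j ∈ st.2, Disjoint (Q j) st.1) ∧
    (st.2 : Set (Fin n)).Pairwise fun j k => Disjoint (Q j) (Q k)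

variable {p : Sym2 V → ℝ≥0∞} {Q : Fin n → Finset (Sym2 V)} {v : Fin n → ℝ≥0}
  {t : Fin n → Bool} {st : Finset (Sym2 V) × Finset (Fin n)} {l : List (Fin n)} {j k : Fin n}

theorem accepts_false_iff : Accepts p Q v (fun _ => false) j ↔ price p (Q j) < v j := by
  simp [Accepts]

theorem price_singleton (e : Sym2 V) : price p {e} = p e := sum_singleton _ _

variable [DecidableEq V]

theorem price_pair {e f : Sym2 V} (h : e ≠ f) : price p {e, f} = p e + p f := sum_pair h

theorem step_of_accepts (hQ : Q j ⊆ st.1) (hj : Accepts p Q v t j) :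
    step p Q v t st j = (st.1 \ Q j, insert j st.2) :=
  if_pos ⟨hQ, hj⟩

theorem snd_subset_step : st.2 ⊆ (step p Q v t st j).2 := by
  unfold step
  split_ifs
  exacts [subset_insert _ _, subset_rfl]

theorem mem_snd_step (h : k ∈ (step p Q v t st j).2) :
    k ∈ st.2 ∨ k = j ∧ Accepts p Q v t j := by
  unfold step at h
  split_ifs at h with hbuy
  · exact (mem_insert.1 h).elim (fun hk => .inr ⟨hk, hbuy.2⟩) .inl
  · exact .inl h

theorem subset_fst_step {s : Finset (Sym2 V)} (hs : s ⊆ st.1) (hj : Disjoint (Q j) s) :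
    s ⊆ (step p Q v t st j).1 := by
  unfold step
  split_ifs
  exacts [le_sdiff.2 ⟨hs, hj.symm⟩, hs]

theorem IsFeasibleState.step (h : IsFeasibleState Q st) :
    IsFeasibleState Q (step p Q v t st j) := by
  unfold Tollbooth.step
  split_ifs with hbuy
  · obtain ⟨hfree, hpair⟩ := h
    refine ⟨fun k hk => ?_, ?_⟩
    · rcases mem_insert.1 hk with rfl | hk
      · exact disjoint_sdiff_self_right
      · exact (hfree k hk).mono_right sdiff_subset
    · rw [coe_insert, Set.pairwise_insert]
      exact ⟨hpair, fun k hk _ =>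
        have hkj := (hfree k hk).mono_right hbuy.1
        ⟨hkj.symm, hkj⟩⟩
  · exact h

theorem snd_subset_foldl : st.2 ⊆ (l.foldl (step p Q v t) st).2 := by
  induction l generalizing st with
  | nil => exact subset_rfl
  | cons j l ih => exact snd_subset_step.trans ih

theorem mem_snd_foldl (h : k ∈ (l.foldl (step p Q v t) st).2) :
    k ∈ st.2 ∨ Accepts p Q v t k := by
  induction l generalizing st with
  | nil => exact .inl h
  | cons j l ih =>
    refine (ih h).elim (fun hk => ?_) .inr
    exact (mem_snd_step hk).imp_right fun ⟨hkj, hj⟩ => hkj ▸ hj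

theorem subset_fst_foldl {s : Finset (Sym2 V)} (hs : s ⊆ st.1)
    (hl : ∀ k ∈ l, Disjoint (Q k) s) : s ⊆ (l.foldl (step p Q v t) st).1 := by
  induction l generalizing st with
  | nil => exact hs
  | cons j l ih =>
    exact ih (subset_fst_step hs (hl j (List.mem_cons_self ..)))
      fun k hk => hl k (List.mem_cons_of_mem _ hk)

theorem IsFeasibleState.foldl (h : IsFeasibleState Q st) :
    IsFeasibleState Q (l.foldl (Tollbooth.step p Q v t) st) := by
  induction l generalizing st with
  | nil => exact h
  | cons j l ih => exact ih h.step

variable [Fintype V] {G : SimpleGraph V} {σ : Equiv.Perm (Fin n)}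

theorem accepts_of_mem_purchased (h : j ∈ purchased G p Q v σ t) : Accepts p Q v t j :=
  (mem_snd_foldl h).resolve_left (notMem_empty j)

theorem pairwise_disjoint_purchased :
    (purchased G p Q v σ t : Set (Fin n)).Pairwise fun j k => Disjoint (Q j) (Q k) :=
  (IsFeasibleState.foldl (st := (G.edgeFinset, ∅)) ⟨by simp, by simp⟩).2

theorem notMem_purchased_of_le_price (h : (v j : ℝ≥0∞) ≤ price p (Q j)) :
    j ∉ purchased G p Q v σ (fun _ => false) :=
  fun hj => (accepts_false_iff.1 (accepts_of_mem_purchased hj)).not_ge h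

theorem notMem_purchased_of_mem (hj : j ∈ purchased G p Q v σ t) (hjk : j ≠ k)
    (hQ : ¬Disjoint (Q j) (Q k)) : k ∉ purchased G p Q v σ t :=
  fun hk => hQ (pairwise_disjoint_purchased hj hk hjk)

theorem mem_purchased_of_accepts {l₁ l₂ : List (Fin n)}
    (hσ : List.ofFn (fun i => σ i) = l₁ ++ j :: l₂) (hQ : (Q j : Set (Sym2 V)) ⊆ G.edgeSet)
    (hl₁ : ∀ k ∈ l₁, Disjoint (Q k) (Q j)) (hj : Accepts p Q v t j) :
    j ∈ purchased G p Q v σ t := by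
  have hfree : Q j ⊆ (l₁.foldl (step p Q v t) (G.edgeFinset, ∅)).1 :=
    subset_fst_foldl (by rwa [← coe_subset, coe_edgeFinset]) hl₁
  rw [purchased, hσ, List.foldl_append, List.foldl_cons, step_of_accepts hfree hj]
  exact snd_subset_foldl (mem_insert_self _ _)

end Selling

section Optimum

variable {V : Type*} [DecidableEq V] {n : ℕ} {Q : Fin n → Finset (Sym2 V)}
  {v : Fin n → ℝ≥0}

theorem sum_le_OPT {S : Finset (Fin n)}
    (hS : (S : Set (Fin n)).Pairwise fun j k => Disjoint (Q j) (Q k)) :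
    ∑ j ∈ S, v j ≤ OPT Q v :=
  le_sup (f := fun S => ∑ j ∈ S, v j) (mem_filter.2 ⟨mem_powerset.2 (subset_univ S), hS⟩)

theorem OPT_le_card {s : Finset (Sym2 V)} (hQ : ∀ j, Q j ⊆ s) (hv : ∀ j, v j ≤ #(Q j)) :
    OPT Q v ≤ #s :=
  Finset.sup_le fun S hS => calc
    ∑ j ∈ S, v j ≤ ∑ j ∈ S, (#(Q j) : ℝ≥0) := sum_le_sum fun j _ => hv j
    _ = #(S.biUnion Q) := by rw [card_biUnion (mem_filter.1 hS).2]; push_cast; rfl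
    _ ≤ #s := by exact_mod_cast card_le_card (biUnion_subset.2 fun j _ => hQ j)

end Optimum

section Paths

variable {V : Type*} [DecidableEq V] {G : SimpleGraph V} {s : Finset (Sym2 V)}
  {u w x : V}

theorem IsPathEdges.coe_subset_edgeSet (h : IsPathEdges G s) :
    (s : Set (Sym2 V)) ⊆ G.edgeSet := by
  obtain ⟨_, _, W, -, -, rfl⟩ := h
  exact fun e he => W.edges_subset_edgeSet (List.mem_toFinset.1 he)

theorem isPathEdges_singleton (h : G.Adj u w) : IsPathEdges G {s(u, w)} :=
  ⟨u, w, h.toWalk, .of_adj h, by simp, by simp⟩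

theorem isPathEdges_pair (huw : G.Adj u w) (hwx : G.Adj w x) (hux : u ≠ x) :
    IsPathEdges G {s(u, w), s(w, x)} :=
  ⟨u, x, .cons huw hwx.toWalk, (Walk.IsPath.of_adj hwx).cons (by simp [huw.ne, hux]),
    by simp, by simp⟩

end Paths

end Tollbooth

open Finset in
theorem SimpleGraph.degree_pathGraph_le_two {n : ℕ} (w : Fin n)
    [Fintype ((pathGraph n).neighborSet w)] : (pathGraph n).degree w ≤ 2 := by
  rw [← card_neighborFinset_eq_degree]
  calc #((pathGraph n).neighborFinset w) ≤ #({w.val - 1, w.val + 1} : Finset ℕ) :=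
        Finset.card_le_card_of_injOn Fin.val
          (fun u hu => by
            simp only [Finset.coe_insert, Finset.coe_singleton, Set.mem_insert_iff,
              Set.mem_singleton_iff]
            have := pathGraph_adj.1 ((mem_neighborFinset _ _ _).1 hu)
            omega)
          Fin.val_injective.injOn
    _ ≤ 2 := Finset.card_le_two

namespace Tollbooth.PathExample

open Finset SimpleGraph

def demand : Fin 4 → Finset (Sym2 (Fin 4)) :=
  ![{s(0, 1)}, {s(2, 3)}, {s(0, 1), s(1, 2)}, {s(1, 2), s(2, 3)}]

def value : Fin 4 → ℝ≥0 := ![1, 1, 2, 2]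

theorem edgeFinset_pathGraph_four [Fintype (pathGraph 4).edgeSet] :
    (pathGraph 4).edgeFinset = {s(0, 1), s(1, 2), s(2, 3)} := by
  ext e
  induction e using Sym2.ind with
  | h x y => fin_cases x <;> fin_cases y <;> simp [pathGraph_adj]

theorem isPathGraph_pathGraph_four : IsPathGraph (pathGraph 4) := by
  classical
  refine ⟨isTree_iff_connected_and_card.2 ⟨pathGraph_connected 3, ?_⟩,
    fun w => degree_pathGraph_le_two w⟩
  rw [Nat.card_eq_fintype_card, ← edgeFinset_card, edgeFinset_pathGraph_four]
  simp

theorem instance_demand_value : Instance (pathGraph 4) demand value := by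
  have adj (i : Fin 3) : (pathGraph 4).Adj i.castSucc i.succ := pathGraph_adj.2 (.inl rfl)
  refine ⟨by norm_num, fun j => ?_⟩
  fin_cases j
  · exact ⟨by simp [value], isPathEdges_singleton (adj 0)⟩
  · exact ⟨by simp [value], isPathEdges_singleton (adj 2)⟩
  · exact ⟨by simp [value], isPathEdges_pair (adj 0) (adj 1) (by decide)⟩
  · exact ⟨by simp [value], isPathEdges_pair (adj 1) (adj 2) (by decide)⟩

theorem OPT_demand_value : OPT demand value = 3 := by
  refine le_antisymm ?_ ?_
  · have := OPT_le_card (Q := demand) (v := value) (s := {s(0, 1), s(1, 2), s(2, 3)})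
      (fun j => by fin_cases j <;> decide) (fun j => by fin_cases j <;> simp [value, demand])
    simpa using this
  · calc (3 : ℝ≥0) = ∑ j ∈ {0, 3}, value j := by
          rw [sum_pair (by decide)]; norm_num [value, Matrix.cons_val_three]
      _ ≤ OPT demand value := sum_le_OPT (by decide)

theorem coe_demand_subset_edgeSet (j : Fin 4) :
    (demand j : Set (Sym2 (Fin 4))) ⊆ (pathGraph 4).edgeSet :=
  (instance_demand_value.2 j).2.coe_subset_edgeSet

variable {p : Sym2 (Fin 4) → ℝ≥0∞}

theorem price_demand_zero : price p (demand 0) = p s(0, 1) := price_singleton _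

theorem price_demand_one : price p (demand 1) = p s(2, 3) := price_singleton _

theorem price_demand_two : price p (demand 2) = p s(0, 1) + p s(1, 2) := price_pair (by decide)

theorem price_demand_three : price p (demand 3) = p s(1, 2) + p s(2, 3) :=
  price_pair (by decide)

theorem wel_le_two_of_two_le (h₂ : 2 ≤ p s(0, 1) + p s(1, 2))
    (h₃ : 2 ≤ p s(1, 2) + p s(2, 3)) (σ : Equiv.Perm (Fin 4)) :
    Wel (pathGraph 4) p demand value σ (fun _ => false) ≤ 2 := by
  have hsub : purchased (pathGraph 4) p demand value σ (fun _ => false) ⊆ {0, 1} := by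
    intro j hj
    fin_cases j
    · simp
    · simp
    · exact absurd hj (notMem_purchased_of_le_price (by simpa [price_demand_two, value]))
    · exact absurd hj (notMem_purchased_of_le_price (by simpa [price_demand_three, value]))
  calc Wel (pathGraph 4) p demand value σ (fun _ => false) ≤ ∑ j ∈ {0, 1}, value j :=
        sum_le_sum_of_subset hsub
    _ = 2 := by rw [sum_pair (by decide)]; norm_num [value]

theorem wel_one_le_two (h₀ : p s(0, 1) < 1) (h₁ : p s(2, 3) < 1) :
    Wel (pathGraph 4) p demand value 1 (fun _ => false) ≤ 2 := by
  have hσ : List.ofFn (fun i => (1 : Equiv.Perm (Fin 4)) i) = [] ++ 0 :: [1, 2, 3] := by decide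
  have hσ' : List.ofFn (fun i => (1 : Equiv.Perm (Fin 4)) i) = [0] ++ 1 :: [2, 3] := by decide
  have hbuy₀ : 0 ∈ purchased (pathGraph 4) p demand value 1 (fun _ => false) :=
    mem_purchased_of_accepts hσ (coe_demand_subset_edgeSet 0) (by simp)
      (.inl (by simpa [price_demand_zero, value]))
  have hbuy₁ : 1 ∈ purchased (pathGraph 4) p demand value 1 (fun _ => false) :=
    mem_purchased_of_accepts hσ' (coe_demand_subset_edgeSet 1) (by decide)
      (.inl (by simpa [price_demand_one, value]))
  have hsub : purchased (pathGraph 4) p demand value 1 (fun _ => false) ⊆ {0, 1} := by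
    intro j hj
    fin_cases j
    · simp
    · simp
    · exact absurd hj (notMem_purchased_of_mem hbuy₀ (by decide) (by decide))
    · exact absurd hj (notMem_purchased_of_mem hbuy₁ (by decide) (by decide))
  calc Wel (pathGraph 4) p demand value 1 (fun _ => false) ≤ ∑ j ∈ {0, 1}, value j :=
        sum_le_sum_of_subset hsub
    _ = 2 := by rw [sum_pair (by decide)]; norm_num [value]

theorem wel_swap_zero_two_le_two (h₂ : p s(0, 1) + p s(1, 2) < 2) (h₁ : 1 ≤ p s(2, 3)) :
    Wel (pathGraph 4) p demand value (Equiv.swap 0 2) (fun _ => false) ≤ 2 := by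
  have hσ : List.ofFn (fun i => Equiv.swap (0 : Fin 4) 2 i) = [] ++ 2 :: [1, 0, 3] := by decide
  have hbuy₂ : 2 ∈ purchased (pathGraph 4) p demand value (Equiv.swap 0 2) (fun _ => false) :=
    mem_purchased_of_accepts hσ (coe_demand_subset_edgeSet 2) (by simp)
      (.inl (by simpa [price_demand_two, value]))
  have hsub :
      purchased (pathGraph 4) p demand value (Equiv.swap 0 2) (fun _ => false) ⊆ {2} := by
    intro j hj
    fin_cases j
    · exact absurd hj (notMem_purchased_of_mem hbuy₂ (by decide) (by decide))
    · exact absurd hj (notMem_purchased_of_le_price (by simpa [price_demand_one, value]))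
    · simp
    · exact absurd hj (notMem_purchased_of_mem hbuy₂ (by decide) (by decide))
  calc Wel (pathGraph 4) p demand value (Equiv.swap 0 2) (fun _ => false)
        ≤ ∑ j ∈ {2}, value j := sum_le_sum_of_subset hsub
    _ = 2 := by simp [value]

theorem wel_swap_zero_three_le_two (h₃ : p s(1, 2) + p s(2, 3) < 2) (h₀ : 1 ≤ p s(0, 1)) :
    Wel (pathGraph 4) p demand value (Equiv.swap 0 3) (fun _ => false) ≤ 2 := by
  have hσ : List.ofFn (fun i => Equiv.swap (0 : Fin 4) 3 i) = [] ++ 3 :: [1, 2, 0] := by decide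
  have hbuy₃ : 3 ∈ purchased (pathGraph 4) p demand value (Equiv.swap 0 3) (fun _ => false) :=
    mem_purchased_of_accepts hσ (coe_demand_subset_edgeSet 3) (by simp)
      (.inl (by simpa [price_demand_three, value]))
  have hsub :
      purchased (pathGraph 4) p demand value (Equiv.swap 0 3) (fun _ => false) ⊆ {3} := by
    intro j hj
    fin_cases j
    · exact absurd hj (notMem_purchased_of_le_price (by simpa [price_demand_zero, value]))
    · exact absurd hj (notMem_purchased_of_mem hbuy₃ (by decide) (by decide))
    · exact absurd hj (notMem_purchased_of_mem hbuy₃ (by decide) (by decide))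
    · simp
  calc Wel (pathGraph 4) p demand value (Equiv.swap 0 3) (fun _ => false)
        ≤ ∑ j ∈ {3}, value j := sum_le_sum_of_subset hsub
    _ = 2 := by simp [value]

theorem exists_wel_le_two (p : Sym2 (Fin 4) → ℝ≥0∞) :
    ∃ (σ : Equiv.Perm (Fin 4)) (t : Fin 4 → Bool),
      Wel (pathGraph 4) p demand value σ t ≤ 2 := by
  by_cases hcheap : p s(0, 1) < 1 ∧ p s(2, 3) < 1
  · exact ⟨1, _, wel_one_le_two hcheap.1 hcheap.2⟩
  by_cases h₂ : p s(0, 1) + p s(1, 2) < 2 ∧ 1 ≤ p s(2, 3)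
  · exact ⟨_, _, wel_swap_zero_two_le_two h₂.1 h₂.2⟩
  by_cases h₃ : p s(1, 2) + p s(2, 3) < 2 ∧ 1 ≤ p s(0, 1)
  · exact ⟨_, _, wel_swap_zero_three_le_two h₃.1 h₃.2⟩
  have hcheap_of_cheap {a b c : ℝ≥0∞} (hab : a + b < 2) (ha : 1 ≤ a) (hc : c < 1) :
      b + c < 2 := by
    have hb : b < 1 := lt_of_not_ge fun hb => hab.not_ge <| by
      simpa [one_add_one_eq_two] using add_le_add ha hb
    simpa [one_add_one_eq_two] using ENNReal.add_lt_add hb hc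
  refine ⟨1, _, wel_le_two_of_two_le ?_ ?_ 1⟩ <;> by_contra! h
  · have hc : p s(2, 3) < 1 := lt_of_not_ge fun hc => h₂ ⟨h, hc⟩
    have ha : 1 ≤ p s(0, 1) := le_of_not_gt fun ha => hcheap ⟨ha, hc⟩
    exact h₃ ⟨hcheap_of_cheap h ha hc, ha⟩
  · have ha : p s(0, 1) < 1 := lt_of_not_ge fun ha => h₃ ⟨h, ha⟩
    have hc : 1 ≤ p s(2, 3) := le_of_not_gt fun hc => hcheap ⟨ha, hc⟩
    exact h₂ ⟨(add_comm _ _).trans_lt (hcheap_of_cheap ((add_comm _ _).trans_lt h) hc ha), hc⟩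

end Tollbooth.PathExample

/-- There is a tollbooth instance on a path graph with three edges
`e1, e2, e3` and four buyers — buyer `0` demanding `{e1}` with value `1`, buyer `1`
demanding `{e3}` with value `1`, buyer `2` demanding `{e1,e2}` with value `2` and buyer `3`
demanding `{e2,e3}` with value `2` — with `OPT = 3`, such that for every item pricing `p`
there exist an arrival order `σ` and a tie-breaking choice `t` with `Wel(p,σ,t) ≤ 2`. -/
theorem path_no_tie_lower_bound :
    ∃ (V : Type) (iV : Fintype V) (dV : DecidableEq V) (G : SimpleGraph V)
      (Q : Fin 4 → Finset (Sym2 V)) (v : Fin 4 → ℝ≥0) (e1 e2 e3 : Sym2 V),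
      Tollbooth.IsPathGraph G ∧ Tollbooth.Instance G Q v ∧
        G.edgeFinset = {e1, e2, e3} ∧ e1 ≠ e2 ∧ e2 ≠ e3 ∧ e1 ≠ e3 ∧
        Q 0 = {e1} ∧ v 0 = 1 ∧ Q 1 = {e3} ∧ v 1 = 1 ∧
        Q 2 = {e1, e2} ∧ v 2 = 2 ∧ Q 3 = {e2, e3} ∧ v 3 = 2 ∧
        Tollbooth.OPT Q v = 3 ∧
        ∀ p : Sym2 V → ℝ≥0∞, ∃ (σ : Equiv.Perm (Fin 4)) (t : Fin 4 → Bool),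
          Tollbooth.Wel G p Q v σ t ≤ 2 :=
  open Tollbooth.PathExample in
  ⟨Fin 4, inferInstance, inferInstance, SimpleGraph.pathGraph 4, demand, value,
    s(0, 1), s(1, 2), s(2, 3), isPathGraph_pathGraph_four, instance_demand_value,
    edgeFinset_pathGraph_four, by decide, by decide, by decide, rfl, rfl, rfl, rfl, rfl, rfl, rfl,
    rfl, OPT_demand_value, exists_wel_le_two⟩
end
end

section
/- Let G be a finite simple graph. Every extreme point y of the fractional matching polytope P(G) is half-integral, i.e., y(e) ∈ {0, 1/2, 1} for every edge e; moreover, the subgraph of G spanned by the edges e with y(e) = 1/2 has every connected component equal to a cycle of odd length. -/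
/-
At an extreme point `y` of `P(G)`, no nonzero `δ` supported on the fractional edges
(`0 < y e < 1`) can keep every tight vertex tight, for otherwise `y ± t δ` lies in `P(G)` for
small `t`. So `δ` is determined by its sums at the tight vertices, and the fractional graph has at
most as many edges as tight vertices; since a tight vertex meeting a fractional edge meets at
least two, double counting leaves every vertex with fractional degree `0` or `2`. The
perturbation `1 - 2 y` then forces `y = 1/2` on the fractional edges, and an even cycle would
carry the alternating perturbation `±1`, so the fractional graph is a union of odd cycles.
-/

open scoped Classical

noncomputable section

/-- Membership in the fractional matching polytope `P(G)` of `G` : `y` is supported on the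
edges of `G`, is nonnegative, and for every vertex the total weight of the incident edges is
at most `1`. -/
def InFracMatchingPolytope {V : Type*} [Fintype V] [DecidableEq V]
    (G : SimpleGraph V) (y : Sym2 V → ℝ) : Prop :=
  (∀ e, e ∉ G.edgeSet → y e = 0) ∧ (∀ e, 0 ≤ y e) ∧
    ∀ w : V, ∑ e ∈ G.edgeFinset.filter (fun e => w ∈ e), y e ≤ 1

open Finset SimpleGraph Filter Topology

namespace SimpleGraph

variable {V : Type*} [DecidableEq V] {G H : SimpleGraph V} [LocallyFinite G] [LocallyFinite H]

lemma incidenceFinset_mono (hle : H ≤ G) (v : V) :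
    H.incidenceFinset v ⊆ G.incidenceFinset v := by
  intro e he
  simp only [mem_incidenceFinset, incidenceSet, Set.mem_sep_iff] at he ⊢
  exact ⟨edgeSet_mono hle he.1, he.2⟩

lemma mem_edgeSet_of_mem_incidenceFinset {v : V} {e : Sym2 V} (he : e ∈ G.incidenceFinset v) :
    e ∈ G.edgeSet :=
  G.incidenceSet_subset v ((mem_incidenceFinset G v e).1 he)

lemma sum_incidenceFinset_of_le (hle : H ≤ G) {δ : Sym2 V → ℝ} {v : V}
    (hδ : ∀ e ∈ G.incidenceFinset v, e ∉ H.edgeSet → δ e = 0) :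
    ∑ e ∈ H.incidenceFinset v, δ e = ∑ e ∈ G.incidenceFinset v, δ e := by
  refine sum_subset (incidenceFinset_mono hle v) fun e he hne => hδ e he fun h => hne ?_
  simp only [mem_incidenceFinset, incidenceSet, Set.mem_sep_iff] at he ⊢
  exact ⟨h, he.2⟩

end SimpleGraph

namespace SimpleGraph.Walk

variable {V : Type*} [DecidableEq V] {G : SimpleGraph V}

/-- The edge weighting `+1, -1, +1, …` along a walk (summed over repeated edges). -/
def altWeight : {u v : V} → G.Walk u v → Sym2 V → ℝ
  | _, _, nil => 0
  | _, _, @cons _ _ u w _ _ p => fun e => (if e = s(u, w) then 1 else 0) - p.altWeight e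

@[simp] lemma altWeight_nil {u : V} : (nil : G.Walk u u).altWeight = 0 := rfl

@[simp] lemma altWeight_cons {u w v : V} (h : G.Adj u w) (p : G.Walk w v) (e : Sym2 V) :
    (cons h p).altWeight e = (if e = s(u, w) then 1 else 0) - p.altWeight e := rfl

lemma altWeight_eq_zero_of_notMem {u v : V} (p : G.Walk u v) {e : Sym2 V} (he : e ∉ p.edges) :
    p.altWeight e = 0 := by
  induction p with
  | nil => rfl
  | cons h p ih =>
    simp only [edges_cons, List.mem_cons, not_or] at he
    simp [he.1, ih he.2]

lemma IsTrail.altWeight_ne_zero {u v : V} {p : G.Walk u v} (hp : p.IsTrail) {e : Sym2 V}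
    (he : e ∈ p.edges) : p.altWeight e ≠ 0 := by
  induction p with
  | nil => simp at he
  | cons h p ih =>
    rw [isTrail_cons] at hp
    rcases List.mem_cons.mp he with rfl | he
    · simp [p.altWeight_eq_zero_of_notMem hp.2]
    · have hne : e ≠ s(_, _) := fun h => hp.2 (h ▸ he)
      simpa [hne] using ih hp.1 he

/-- Every inner vertex of a walk meets two consecutive edges, of opposite weights, so only the
endpoints see a nonzero total weight. -/
lemma sum_incidenceFinset_altWeight [LocallyFinite G] {u v : V}
    (p : G.Walk u v) (x : V) :
    ∑ e ∈ G.incidenceFinset x, p.altWeight e =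
      (if u = x then 1 else 0) - (-1) ^ p.length * (if v = x then 1 else 0) := by
  induction p with
  | nil => simp
  | @cons a c b h p ih =>
    have hac : a ≠ c := h.ne
    have hmem : s(a, c) ∈ G.incidenceFinset x ↔ a = x ∨ c = x := by
      simp [mem_incidenceFinset, incidenceSet, h, eq_comm]
    have hind : ∑ e ∈ G.incidenceFinset x, (if e = s(a, c) then (1 : ℝ) else 0) =
        if a = x ∨ c = x then 1 else 0 := by
      simp only [sum_ite_eq', hmem]
    simp only [altWeight_cons, sum_sub_distrib, hind, ih, length_cons, pow_succ]
    split_ifs <;> grind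

end SimpleGraph.Walk

lemma eventually_lt_add_mul {a c : ℝ} (h : c < a) (b : ℝ) :
    ∀ᶠ t in 𝓝 (0 : ℝ), c < a + t * b := by
  have : Tendsto (fun t : ℝ => a + t * b) (𝓝 0) (𝓝 a) :=
    (continuous_const.add (continuous_id.mul continuous_const)).tendsto' 0 a (by simp)
  exact this.eventually_const_lt h

namespace FracMatching

variable {V : Type*} [Fintype V] [DecidableEq V]

def IsExtreme (G : SimpleGraph V) (y : Sym2 V → ℝ) : Prop :=
  InFracMatchingPolytope G y ∧ ∀ y' y'', InFracMatchingPolytope G y' →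
    InFracMatchingPolytope G y'' → (∀ e, y e = (y' e + y'' e) / 2) → y' = y''

def IsTight (G : SimpleGraph V) (y : Sym2 V → ℝ) (v : V) : Prop :=
  ∑ e ∈ G.incidenceFinset v, y e = 1

def fractionalGraph (y : Sym2 V → ℝ) : SimpleGraph V :=
  fromEdgeSet {e | 0 < y e ∧ y e < 1}

end FracMatching

open FracMatching

section

variable {V : Type*} [Fintype V] [DecidableEq V] {G : SimpleGraph V} {y : Sym2 V → ℝ}

lemma inFracMatchingPolytope_iff :
    InFracMatchingPolytope G y ↔ (∀ e, e ∉ G.edgeSet → y e = 0) ∧ (∀ e, 0 ≤ y e) ∧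
      ∀ v, ∑ e ∈ G.incidenceFinset v, y e ≤ 1 := by
  simp only [InFracMatchingPolytope, incidenceFinset_eq_filter]

namespace InFracMatchingPolytope

variable (hy : InFracMatchingPolytope G y)
include hy

lemma mem_edgeSet_of_pos {e : Sym2 V} (he : 0 < y e) : e ∈ G.edgeSet := by
  by_contra h
  exact he.ne' (hy.1 e h)

lemma le_one (e : Sym2 V) : y e ≤ 1 := by
  by_cases he : e ∈ G.edgeSet
  · induction e using Sym2.ind with
    | _ a b =>
      refine le_trans ?_ ((inFracMatchingPolytope_iff.1 hy).2.2 a)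
      exact single_le_sum (fun e _ => hy.2.1 e) (by simp [mem_incidenceFinset, incidenceSet, he])
  · rw [hy.1 e he]; exact zero_le_one

lemma mem_edgeSet_fractionalGraph {e : Sym2 V} :
    e ∈ (fractionalGraph y).edgeSet ↔ 0 < y e ∧ y e < 1 := by
  rw [fractionalGraph, edgeSet_fromEdgeSet]
  exact ⟨And.left, fun h => ⟨h, G.not_isDiag_of_mem_edgeSet (hy.mem_edgeSet_of_pos h.1)⟩⟩

lemma fractionalGraph_le : fractionalGraph y ≤ G := fun a b h =>
  hy.mem_edgeSet_of_pos ((hy.mem_edgeSet_fractionalGraph (e := s(a, b))).1 h).1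

lemma sum_incidenceFinset_fractionalGraph_eq_one {v : V} (hv : IsTight G y v)
    (hdeg : 0 < (fractionalGraph y).degree v) :
    ∑ e ∈ (fractionalGraph y).incidenceFinset v, y e = 1 := by
  obtain ⟨f, hf⟩ : ((fractionalGraph y).incidenceFinset v).Nonempty := by
    rwa [← card_pos, card_incidenceFinset_eq_degree]
  have hfy := hy.mem_edgeSet_fractionalGraph.1 (mem_edgeSet_of_mem_incidenceFinset hf)
  rw [sum_incidenceFinset_of_le hy.fractionalGraph_le, hv]
  intro e he heH
  -- an integral edge `e` at the tight vertex `v` with `y e = 1` would leave no room for `f`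
  refine ((hy.2.1 e).eq_or_lt.resolve_right fun hpos => ?_).symm
  have hone : 1 ≤ y e := by
    by_contra h
    exact heH (hy.mem_edgeSet_fractionalGraph.2 ⟨hpos, not_le.1 h⟩)
  have hfG := incidenceFinset_mono hy.fractionalGraph_le v hf
  have hne : e ≠ f := by
    rintro rfl; exact heH (mem_edgeSet_of_mem_incidenceFinset hf)
  have : y e + y f ≤ ∑ e ∈ G.incidenceFinset v, y e := by
    rw [← sum_pair hne]
    exact sum_le_sum_of_subset_of_nonneg (insert_subset he (singleton_subset_iff.2 hfG))
      fun e _ _ => hy.2.1 e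
  linarith [hv.le, hfy.1]

lemma two_le_degree_fractionalGraph {v : V} (hv : IsTight G y v)
    (hdeg : 0 < (fractionalGraph y).degree v) :
    2 ≤ (fractionalGraph y).degree v := by
  by_contra h
  obtain ⟨f, hf⟩ := card_eq_one.1 <| show #((fractionalGraph y).incidenceFinset v) = 1 by
    rw [card_incidenceFinset_eq_degree]; omega
  have hsum := hy.sum_incidenceFinset_fractionalGraph_eq_one hv hdeg
  rw [hf, sum_singleton] at hsum
  have hfH := mem_edgeSet_of_mem_incidenceFinset (hf ▸ mem_singleton_self f)
  exact (hy.mem_edgeSet_fractionalGraph.1 hfH).2.ne hsum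

end InFracMatchingPolytope

namespace FracMatching.IsExtreme

variable (hy : IsExtreme G y)
include hy

lemma eq_zero_of_perturbation {δ : Sym2 V → ℝ}
    (hsupp : ∀ e, y e = 0 → δ e = 0)
    (htight : ∀ v, IsTight G y v → ∑ e ∈ G.incidenceFinset v, δ e = 0) : δ = 0 := by
  obtain ⟨hP, hext⟩ := hy
  obtain ⟨hzero, hnonneg, hvert⟩ := inFracMatchingPolytope_iff.1 hP
  have hnonneg' : ∀ᶠ t in 𝓝 (0 : ℝ), ∀ e, 0 ≤ y e + t * δ e := by
    refine eventually_all.2 fun e => ?_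
    rcases (hnonneg e).eq_or_lt with he | he
    · exact .of_forall fun t => by simp [← he, hsupp e he.symm]
    · exact (eventually_lt_add_mul he (δ e)).mono fun t => le_of_lt
  have hvert' :
      ∀ᶠ t in 𝓝 (0 : ℝ), ∀ v, ∑ e ∈ G.incidenceFinset v, (y e + t * δ e) ≤ 1 := by
    refine eventually_all.2 fun v => ?_
    simp only [sum_add_distrib, ← mul_sum]
    by_cases hv : IsTight G y v
    · exact .of_forall fun t => by simp [hv.le, htight v hv]
    · have hlt : -1 < -∑ e ∈ G.incidenceFinset v, y e := neg_lt_neg ((hvert v).lt_of_ne hv)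
      exact (eventually_lt_add_mul hlt (-∑ e ∈ G.incidenceFinset v, δ e)).mono fun t ht => by
        linarith
  have hmem : ∀ᶠ t in 𝓝 (0 : ℝ), InFracMatchingPolytope G (fun e => y e + t * δ e) :=
    (hnonneg'.and hvert').mono fun t ht => inFracMatchingPolytope_iff.2
      ⟨fun e he => by simp [hzero e he, hsupp e (hzero e he)], ht⟩
  obtain ⟨ε, hε, hball⟩ := Metric.eventually_nhds_iff.1 hmem
  have hsym := hext _ _ (@hball (ε / 2) (by simp [abs_of_pos hε, hε]))
    (@hball (-(ε / 2)) (by simp [abs_of_pos hε, hε])) (fun e => by ring)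
  funext e
  have : ε * δ e = 0 := by linarith [congrFun hsym e]
  simpa [hε.ne'] using this

lemma eq_zero_of_fractional_perturbation {δ : Sym2 V → ℝ}
    (hsupp : ∀ e ∉ (fractionalGraph y).edgeSet, δ e = 0)
    (htight : ∀ v, IsTight G y v → ∑ e ∈ (fractionalGraph y).incidenceFinset v, δ e = 0) :
    δ = 0 :=
  hy.eq_zero_of_perturbation
    (fun e he => hsupp e fun h => by simp [hy.1.mem_edgeSet_fractionalGraph, he] at h)
    (fun v hv => by
      rw [← sum_incidenceFinset_of_le hy.1.fractionalGraph_le fun e _ he => hsupp e he]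
      exact htight v hv)

lemma card_edgeFinset_fractionalGraph_le :
    #(fractionalGraph y).edgeFinset ≤
      #{v | IsTight G y v ∧ 0 < (fractionalGraph y).degree v} := by
  set H := fractionalGraph y
  set T : Finset V := {v | IsTight G y v ∧ 0 < H.degree v}
  let L : (Sym2 V → ℝ) →ₗ[ℝ] (T → ℝ) × ({e // e ∉ H.edgeFinset} → ℝ) :=
    { toFun := fun δ => (fun v => ∑ e ∈ H.incidenceFinset v, δ e, fun e => δ e)
      map_add' := fun δ δ' => by ext <;> simp [sum_add_distrib]
      map_smul' := fun c δ => by ext <;> simp [mul_sum] }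
  have hL : Function.Injective L := by
    rw [← LinearMap.ker_eq_bot, LinearMap.ker_eq_bot']
    intro δ hδ
    simp only [L, LinearMap.coe_mk, AddHom.coe_mk, Prod.mk_eq_zero, funext_iff] at hδ
    refine hy.eq_zero_of_fractional_perturbation (fun e he => hδ.2 ⟨e, by simpa using he⟩)
      fun v hv => ?_
    by_cases hdeg : 0 < H.degree v
    · exact hδ.1 ⟨v, by simp [T, hv, hdeg]⟩
    · rw [← card_incidenceFinset_eq_degree, card_pos, not_nonempty_iff_eq_empty] at hdeg
      change ∑ e ∈ H.incidenceFinset v, δ e = 0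
      rw [hdeg, sum_empty]
  have := LinearMap.finrank_le_finrank_of_injective hL
  rw [Module.finrank_prod, Module.finrank_fintype_fun_eq_card, Module.finrank_fintype_fun_eq_card,
    Module.finrank_fintype_fun_eq_card, Fintype.card_subtype_compl, Fintype.card_coe,
    Fintype.card_coe] at this
  have := card_le_univ H.edgeFinset
  omega

lemma degree_fractionalGraph_eq_zero_or_two (v : V) :
    (fractionalGraph y).degree v = 0 ∨ (fractionalGraph y).degree v = 2 := by
  set H := fractionalGraph y
  set T : Finset V := {v | IsTight G y v ∧ 0 < H.degree v}
  have hcard : #H.edgeFinset ≤ #T := hy.card_edgeFinset_fractionalGraph_le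
  have hT : ∀ u ∈ T, 2 ≤ H.degree u := fun u hu => by
    simp only [T, mem_filter, mem_univ, true_and] at hu
    exact hy.1.two_le_degree_fractionalGraph hu.1 hu.2
  have hsum : ∑ u ∈ T, H.degree u + ∑ u ∈ Tᶜ, H.degree u = 2 * #H.edgeFinset := by
    rw [sum_add_sum_compl, sum_degrees_eq_twice_card_edges]
  have h2T : 2 * #T = ∑ u ∈ T, 2 := by rw [sum_const, smul_eq_mul, mul_comm]
  have hle : ∑ u ∈ T, 2 ≤ ∑ u ∈ T, H.degree u := sum_le_sum hT
  by_contra! hv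
  by_cases hvT : v ∈ T
  · have : ∑ u ∈ T, 2 < ∑ u ∈ T, H.degree u :=
      sum_lt_sum hT ⟨v, hvT, lt_of_le_of_ne (hT v hvT) (Ne.symm hv.2)⟩
    omega
  · have : H.degree v ≤ ∑ u ∈ Tᶜ, H.degree u :=
      Finset.single_le_sum (f := fun u => H.degree u) (fun _ _ => Nat.zero_le _) (mem_compl.2 hvT)
    omega

lemma eq_half_of_mem_edgeSet_fractionalGraph {e : Sym2 V}
    (he : e ∈ (fractionalGraph y).edgeSet) : y e = 1 / 2 := by
  set H := fractionalGraph y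
  let δ : Sym2 V → ℝ := fun e => if e ∈ H.edgeSet then 1 - 2 * y e else 0
  have hδ : δ = 0 := by
    refine hy.eq_zero_of_fractional_perturbation (fun e he => if_neg he) fun v hv => ?_
    have hsum : ∑ e ∈ H.incidenceFinset v, δ e =
        H.degree v - 2 * ∑ e ∈ H.incidenceFinset v, y e := by
      rw [sum_congr rfl fun e he => if_pos (mem_edgeSet_of_mem_incidenceFinset he),
        sum_sub_distrib, sum_const, card_incidenceFinset_eq_degree, mul_sum, nsmul_one]
    rcases hy.degree_fractionalGraph_eq_zero_or_two v with h | h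
    · have hempty : H.incidenceFinset v = ∅ := by
        rw [← card_eq_zero, card_incidenceFinset_eq_degree, h]
      rw [hsum, h, hempty]
      simp
    · rw [hsum, hy.1.sum_incidenceFinset_fractionalGraph_eq_one hv (by omega), h]
      norm_num
  have := congrFun hδ e
  simp only [δ, if_pos he, Pi.zero_apply] at this
  linarith

lemma setOf_eq_half : {e | y e = 1 / 2} = {e | 0 < y e ∧ y e < 1} := by
  ext e
  refine ⟨fun h => ?_, fun h => hy.eq_half_of_mem_edgeSet_fractionalGraph
    (hy.1.mem_edgeSet_fractionalGraph.2 h)⟩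
  simp only [Set.mem_ofPred_eq] at h ⊢
  norm_num [h]

lemma mem_zero_half_one (e : Sym2 V) : y e ∈ ({0, 1 / 2, 1} : Set ℝ) := by
  rcases (hy.1.2.1 e).eq_or_lt with h | h
  · exact .inl h.symm
  rcases (hy.1.le_one e).lt_or_eq with h' | h'
  · exact .inr (.inl (hy.eq_half_of_mem_edgeSet_fractionalGraph
      (hy.1.mem_edgeSet_fractionalGraph.2 ⟨h, h'⟩)))
  · exact .inr (.inr h')

lemma isCycles_fractionalGraph : (fractionalGraph y).IsCycles := fun v hv => by
  rw [Set.ncard_eq_toFinset_card', ← neighborFinset_def, card_neighborFinset_eq_degree]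
  refine (hy.degree_fractionalGraph_eq_zero_or_two v).resolve_left fun h => ?_
  obtain ⟨w, hw⟩ := hv
  exact (degree_pos_iff_exists_adj _ v).2 ⟨w, hw⟩ |>.ne' h

lemma odd_length_of_isCycle {v : V} {C : (fractionalGraph y).Walk v v} (hC : C.IsCycle) :
    Odd C.length := by
  by_contra hodd
  rw [Nat.not_odd_iff_even] at hodd
  have hzero : C.altWeight = 0 := hy.eq_zero_of_fractional_perturbation
    (fun e he => C.altWeight_eq_zero_of_notMem fun hmem => he (C.edges_subset_edgeSet hmem))
    (fun x _ => by rw [C.sum_incidenceFinset_altWeight, hodd.neg_one_pow]; ring)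
  obtain ⟨e, he⟩ := List.exists_mem_of_ne_nil _ (Walk.edges_eq_nil.not.2 hC.isCircuit.not_nil)
  exact hC.isCircuit.isTrail.altWeight_ne_zero he (congrFun hzero e)

lemma exists_odd_cycle {w : V} (hw : 0 < (fractionalGraph y).degree w) :
    ∃ C : (fractionalGraph y).Walk w w, C.IsCycle ∧ Odd C.length := by
  obtain ⟨C, hC, -⟩ :=
    hy.isCycles_fractionalGraph.exists_cycle_toSubgraph_verts_eq_connectedComponentSupp
      (c := (fractionalGraph y).connectedComponentMk w) rfl ((degree_pos_iff_exists_adj _ w).1 hw)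
  exact ⟨C, hC, hy.odd_length_of_isCycle hC⟩

end FracMatching.IsExtreme

end

/-- Every extreme point of the fractional matching polytope of a finite
simple graph is half-integral; moreover, in the subgraph spanned by the edges of value `1/2`
every vertex has degree `0` or `2` and every vertex of degree `2` lies on an odd cycle, i.e.
every connected component of that subgraph is a cycle of odd length. -/
theorem fracMatchingPolytope_extremePoint_halfIntegral
    {V : Type*} [Fintype V] [DecidableEq V] (G : SimpleGraph V) (y : Sym2 V → ℝ)
    (hy : InFracMatchingPolytope G y)
    (hext : ∀ y' y'', InFracMatchingPolytope G y' → InFracMatchingPolytope G y'' →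
      (∀ e, y e = (y' e + y'' e) / 2) → y' = y'') :
    (∀ e, y e ∈ ({0, 1 / 2, 1} : Set ℝ)) ∧
      (∀ w : V, (SimpleGraph.fromEdgeSet {e | y e = 1 / 2}).degree w = 0 ∨
          (SimpleGraph.fromEdgeSet {e | y e = 1 / 2}).degree w = 2) ∧
      ∀ w : V, (SimpleGraph.fromEdgeSet {e | y e = 1 / 2}).degree w = 2 →
        ∃ C : (SimpleGraph.fromEdgeSet {e | y e = 1 / 2}).Walk w w,
          C.IsCycle ∧ Odd C.length := by
  have hY : IsExtreme G y := ⟨hy, hext⟩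
  have hH : fromEdgeSet {e | y e = 1 / 2} = fractionalGraph y :=
    congrArg fromEdgeSet hY.setOf_eq_half
  -- `rw [hH]` cannot see through the `Fintype` instances that `degree` depends on
  have hdeg (w : V) : (fromEdgeSet {e | y e = 1 / 2}).degree w = (fractionalGraph y).degree w := by
    congr!
  refine ⟨hY.mem_zero_half_one, fun w => hdeg w ▸ hY.degree_fractionalGraph_eq_zero_or_two w,
    fun w hw => hH ▸ hY.exists_odd_cycle (by rw [← hdeg]; omega)⟩
end
end

section
/- Let P_1,…,P_n be pairwise edge-disjoint paths in a finite simple graph such that the union G = P_1 ∪ … ∪ P_n (the graph whose edge set is the union of the edge sets of the paths, with the induced vertex set) is a tree. Then {1,…,n} can be partitioned into two sets A and B such that every connected component of the graph ∪_{j∈A} P_j is a spider, and every connected component of the graph ∪_{j∈B} P_j is a spider. -/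
open scoped Classical

noncomputable section

/-- `s` is the (nonempty) edge set of a path of `G`. -/
def IsPathEdges {V : Type*} [DecidableEq V] (G : SimpleGraph V) (s : Finset (Sym2 V)) :
    Prop :=
  ∃ (a b : V) (W : G.Walk a b), W.IsPath ∧ W.edges ≠ [] ∧ s = W.edges.toFinset

/-- Every connected component of `H` is a spider: `H` is a forest, and no two distinct
vertices of degree at least `3` lie in the same connected component. -/
def SpiderForest {V : Type*} [Fintype V] [DecidableEq V] (H : SimpleGraph V) : Prop :=
  H.IsAcyclic ∧ ∀ u w : V, 3 ≤ H.degree u → 3 ≤ H.degree w → H.Reachable u w → u = w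

/-!
Root the tree at a vertex `r`. On each path there is a unique vertex nearest to `r`, its top,
and the top is the only vertex of the path whose parent edge is not in the path. If the top is
not `r`, its parent edge lies in exactly one other path, from which the first path hangs; that
path has a strictly higher top, so hanging is well founded and the paths can be 2-coloured so
that no path hangs from a path of its own colour. In a colour class, suppose a vertex `v` of
degree at least 3 kept its parent edge, lying in `P k`. Every other path of the class through
`v` would then hang from `P k`, so all edges of the class at `v` would lie on the single path
`P k`, a contradiction. So branching vertices have lost their parent edges, and a path of the
class joining two of them would have to lead away from the root at both of its ends.
-/

namespace SimpleGraph

variable {V : Type*} {G T : SimpleGraph V}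

lemma Walk.IsPath.exists_setOf_mem_edges_subset_pair {u w : V} {p : G.Walk u w}
    (hp : p.IsPath) (v : V) : ∃ a b, {x | s(v, x) ∈ p.edges} ⊆ {a, b} := by
  by_cases hv : v ∈ p.support
  · obtain ⟨k, rfl, hk⟩ := Walk.mem_support_iff_exists_getVert.1 hv
    refine ⟨p.getVert (k - 1), p.getVert (k + 1), fun x hx => ?_⟩
    obtain ⟨i, hi, hil⟩ := p.toSubgraph_adj_iff.1 (Walk.adj_toSubgraph_iff_mem_edges.2 hx)
    rcases Sym2.eq_iff.1 hi with ⟨hik, rfl⟩ | ⟨rfl, hik⟩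
    · have : i = k := hp.getVert_injOn (by simp; omega) (by simp; omega) hik
      simp [this]
    · have : i + 1 = k := hp.getVert_injOn (by simp; omega) (by simp; omega) hik
      simp [← this]
  · exact ⟨v, v, fun x hx => absurd (p.fst_mem_support_of_mem_edges hx) hv⟩

def parent (T : SimpleGraph V) (r v : V) : V :=
  if h : ∃ w, T.Adj v w ∧ T.dist r v = T.dist r w + 1 then h.choose else v

@[simp]
lemma parent_self (r : V) : T.parent r r = r := by
  simp [parent]

namespace IsTree

variable (hT : T.IsTree) (r : V)
include hT

lemma exists_adj_dist_eq_add_one {v : V} (hv : v ≠ r) :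
    ∃ w, T.Adj v w ∧ T.dist r v = T.dist r w + 1 := by
  obtain ⟨p, -, hp⟩ := hT.connected.exists_path_of_dist v r
  cases p with
  | nil => exact absurd rfl hv
  | @cons _ w _ hadj q =>
    have hq : T.dist r w ≤ q.length := dist_comm (G := T) ▸ dist_le q
    rw [Walk.length_cons, dist_comm] at hp
    have := hT.dist_eq_dist_add_one_of_adj r hadj
    exact ⟨w, hadj, by omega⟩

lemma adj_parent {v : V} (hv : v ≠ r) : T.Adj v (T.parent r v) := by
  rw [parent, dif_pos (hT.exists_adj_dist_eq_add_one r hv)]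
  exact (hT.exists_adj_dist_eq_add_one r hv).choose_spec.1

lemma dist_parent {v : V} (hv : v ≠ r) : T.dist r v = T.dist r (T.parent r v) + 1 := by
  rw [parent, dif_pos (hT.exists_adj_dist_eq_add_one r hv)]
  exact (hT.exists_adj_dist_eq_add_one r hv).choose_spec.2

lemma eq_parent_of_adj {v w : V} (hadj : T.Adj v w) (hd : T.dist r v = T.dist r w + 1) :
    w = T.parent r v := by
  have hv : v ≠ r := by rintro rfl; simp at hd
  -- `v` followed by a geodesic from such an `x` is a geodesic, hence the unique path to `r`.
  have hpath : ∀ x (h : T.Adj v x), T.dist r v = T.dist r x + 1 →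
      ∃ q : T.Walk x r, (Walk.cons h q).IsPath := by
    intro x h hx
    obtain ⟨q, -, hq⟩ := hT.connected.exists_path_of_dist x r
    refine ⟨q, Walk.isPath_of_length_eq_dist _ ?_⟩
    rw [Walk.length_cons, hq, dist_comm, ← hx, dist_comm]
  obtain ⟨q, hq⟩ := hpath w hadj hd
  obtain ⟨q', hq'⟩ := hpath _ (hT.adj_parent r hv) (hT.dist_parent r hv)
  have := (hT.existsUnique_path v r).unique hq hq'
  simpa using congrArg Walk.snd this

lemma dist_eq_dist_add_length {u v : V} (p : T.Walk v u) (hp : p.IsPath)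
    (hv : s(v, T.parent r v) ∉ p.edges) : T.dist r u = T.dist r v + p.length := by
  induction p with
  | nil => simp
  | @cons v w u hadj q ih =>
    have hw : w ≠ T.parent r v := by
      rintro rfl
      exact hv (by simp)
    have hdw : T.dist r w = T.dist r v + 1 := by
      rcases hT.dist_eq_dist_add_one_of_adj r hadj with h | h
      · exact absurd (hT.eq_parent_of_adj r hadj h) hw
      · exact h
    have hparent : T.parent r w = v := (hT.eq_parent_of_adj r hadj.symm hdw).symm
    have hq : s(w, T.parent r w) ∉ q.edges := by
      rw [hparent, Sym2.eq_swap]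
      exact (List.nodup_cons.1 (by simpa using hp.edges_nodup)).1
    rw [ih hp.of_cons hq, Walk.length_cons]
    omega

lemma dist_lt_of_reachable {H : SimpleGraph V} (hHT : H ≤ T) {u w : V} (huw : H.Reachable u w)
    (hne : u ≠ w) (hu : s(u, T.parent r u) ∉ H.edgeSet) : T.dist r u < T.dist r w := by
  obtain ⟨p, hp⟩ := huw.exists_isPath
  have hpT := hT.dist_eq_dist_add_length r (p.mapLe hHT) (hp.mapLe hHT)
    (by rw [Walk.edges_mapLe_eq_edges]; exact fun h => hu (p.edges_subset_edgeSet h))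
  have hlen : p.length ≠ 0 := fun h => hne (Walk.eq_of_length_eq_zero h)
  rw [Walk.length_mapLe] at hpT
  omega

end IsTree

end SimpleGraph

section IsPathEdges

open SimpleGraph

variable {V : Type*} [DecidableEq V] {G H : SimpleGraph V} {s : Finset (Sym2 V)}

lemma IsPathEdges.mem_edgeSet (hs : IsPathEdges G s) {e : Sym2 V} (he : e ∈ s) :
    e ∈ G.edgeSet := by
  obtain ⟨a, b, W, -, -, rfl⟩ := hs
  exact W.edges_subset_edgeSet (List.mem_toFinset.1 he)

lemma IsPathEdges.mono (hs : IsPathEdges G s) (hH : ∀ e ∈ s, e ∈ H.edgeSet) :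
    IsPathEdges H s := by
  obtain ⟨a, b, W, hW, hne, rfl⟩ := hs
  exact ⟨a, b, W.transfer H fun e he => hH e (List.mem_toFinset.2 he), hW.transfer _,
    by rwa [Walk.edges_transfer], by rw [Walk.edges_transfer]⟩

lemma IsPathEdges.exists_setOf_mem_subset_pair (hs : IsPathEdges G s) (v : V) :
    ∃ a b, {x | s(v, x) ∈ s} ⊆ {a, b} := by
  obtain ⟨a, b, W, hW, -, rfl⟩ := hs
  simpa using hW.exists_setOf_mem_edges_subset_pair v

lemma IsPathEdges.reachable (hs : IsPathEdges G s) {v w x y : V} (hv : s(v, x) ∈ s)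
    (hw : s(w, y) ∈ s) : (fromEdgeSet (s : Set (Sym2 V))).Reachable v w := by
  obtain ⟨a, b, W, -, -, rfl⟩ := hs
  let W' := W.transfer (fromEdgeSet ((W.edges.toFinset : Finset (Sym2 V)) : Set (Sym2 V)))
      fun e he => by simpa [he] using G.not_isDiag_of_mem_edgeSet (W.edges_subset_edgeSet he)
  have hreach : ∀ {z t}, s(z, t) ∈ W.edges.toFinset → (fromEdgeSet _).Reachable a z :=
    fun h => (W'.takeUntil _ (by
      rw [Walk.support_transfer]
      exact W.fst_mem_support_of_mem_edges (List.mem_toFinset.1 h))).reachable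
  exact (hreach hv).symm.trans (hreach hw)

end IsPathEdges

def alternatingColoring {α : Type*} (R : α → α → Prop) (μ : α → ℕ)
    (hμ : ∀ k j, R k j → μ k < μ j) (j : α) : Bool :=
  if h : ∃ k, R k j then !alternatingColoring R μ hμ h.choose else false
termination_by μ j
decreasing_by exact hμ _ _ h.choose_spec

theorem exists_bool_ne_of_rel {α : Type*} (R : α → α → Prop) (μ : α → ℕ)
    (hμ : ∀ k j, R k j → μ k < μ j) (huniq : ∀ k k' j, R k j → R k' j → k = k') :
    ∃ c : α → Bool, ∀ k j, R k j → c k ≠ c j := by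
  refine ⟨alternatingColoring R μ hμ, fun k j hkj => ?_⟩
  have h : ∃ k, R k j := ⟨k, hkj⟩
  rw [alternatingColoring.eq_def (j := j), dif_pos h, huniq _ _ _ h.choose_spec hkj]
  cases alternatingColoring R μ hμ k <;> decide

namespace SimpleGraph

variable {V : Type*} [DecidableEq V] {T : SimpleGraph V}

def HangsFrom (T : SimpleGraph V) (r : V) (s t : Finset (Sym2 V)) : Prop :=
  ∃ v x, s(v, x) ∈ t ∧ s(v, T.parent r v) ∉ t ∧ s(v, T.parent r v) ∈ s

def minDepth (T : SimpleGraph V) (r : V) (t : Finset (Sym2 V)) : ℕ :=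
  sInf {d | ∃ v x, s(v, x) ∈ t ∧ T.dist r v = d}

variable {ι : Type*} {P : ι → Finset (Sym2 V)}

lemma ncard_neighborSet_le_two_of_parent_mem (r : V) (hP : ∀ j, IsPathEdges T (P j))
    (hdisj : Pairwise fun j k => Disjoint (P j) (P k)) {S : Finset ι}
    (hS : ∀ j ∈ S, ∀ k ∈ S, ¬ T.HangsFrom r (P k) (P j)) {v : V}
    (hmem : s(v, T.parent r v) ∈ (fromEdgeSet (⋃ j ∈ S, (P j : Set (Sym2 V)))).edgeSet) :
    ((fromEdgeSet (⋃ j ∈ S, (P j : Set (Sym2 V)))).neighborSet v).ncard ≤ 2 := by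
  obtain ⟨k, hk, hvk⟩ := Set.mem_iUnion₂.1 (edgeSet_fromEdgeSet _ ▸ hmem).1
  have hsub : (fromEdgeSet (⋃ j ∈ S, (P j : Set (Sym2 V)))).neighborSet v ⊆
      {x | s(v, x) ∈ P k} := by
    intro x hx
    obtain ⟨j, hj, hvx⟩ := Set.mem_iUnion₂.1 hx.1
    by_cases hvj : s(v, T.parent r v) ∈ P j
    · obtain rfl : j = k := by
        by_contra hne
        exact Finset.disjoint_left.1 (hdisj hne) hvj hvk
      exact hvx
    · exact absurd ⟨v, x, hvx, hvj, hvk⟩ (hS j hj k hk)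
  obtain ⟨a, b, hab⟩ := (hP k).exists_setOf_mem_subset_pair v
  exact (Set.ncard_le_ncard (hsub.trans hab) (Set.toFinite _)).trans
    ((Set.ncard_insert_le _ _).trans (by simp))

namespace IsTree

variable (hT : T.IsTree) (r : V) {s s' t : Finset (Sym2 V)}
include hT

lemma dist_lt_of_isPathEdges (hs : IsPathEdges T s) {v w x y : V} (hv : s(v, x) ∈ s)
    (hw : s(w, y) ∈ s) (hne : v ≠ w) (hpar : s(v, T.parent r v) ∉ s) :
    T.dist r v < T.dist r w :=
  hT.dist_lt_of_reachable r ((fromEdgeSet_le T).2 fun e he => hs.mem_edgeSet he.1)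
    (hs.reachable hv hw) hne (by simp [hpar])

lemma minDepth_eq (ht : IsPathEdges T t) {v x : V} (hv : s(v, x) ∈ t)
    (hpar : s(v, T.parent r v) ∉ t) : T.minDepth r t = T.dist r v := by
  refine le_antisymm (Nat.sInf_le ⟨v, x, hv, rfl⟩) (le_csInf ⟨_, v, x, hv, rfl⟩ ?_)
  rintro _ ⟨w, y, hw, rfl⟩
  rcases eq_or_ne v w with rfl | hne
  · exact le_rfl
  · exact (hT.dist_lt_of_isPathEdges r ht hv hw hne hpar).le

lemma minDepth_lt_of_hangsFrom (hs : IsPathEdges T s) (ht : IsPathEdges T t)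
    (h : T.HangsFrom r s t) : T.minDepth r s < T.minDepth r t := by
  obtain ⟨v, x, hvx, hnot, hin⟩ := h
  have hv : v ≠ r := by
    rintro rfl
    rw [parent_self] at hin
    exact T.irrefl (hs.mem_edgeSet hin)
  calc T.minDepth r s ≤ T.dist r (T.parent r v) :=
        Nat.sInf_le ⟨_, v, by rwa [Sym2.eq_swap], rfl⟩
    _ < T.dist r v := by rw [hT.dist_parent r hv]; omega
    _ = T.minDepth r t := (hT.minDepth_eq r ht hvx hnot).symm

lemma not_disjoint_of_hangsFrom (ht : IsPathEdges T t) (h : T.HangsFrom r s t)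
    (h' : T.HangsFrom r s' t) : ¬ Disjoint s s' := by
  obtain ⟨v, x, hvx, hnot, hin⟩ := h
  obtain ⟨v', x', hvx', hnot', hin'⟩ := h'
  obtain rfl : v = v' := by
    by_contra hne
    have := hT.dist_lt_of_isPathEdges r ht hvx hvx' hne hnot
    have := hT.dist_lt_of_isPathEdges r ht hvx' hvx (Ne.symm hne) hnot'
    omega
  exact Finset.not_disjoint_iff.2 ⟨_, hin, hin'⟩

lemma spiderForest_of_ncard_neighborSet_le_two [Fintype V] {H : SimpleGraph V} (hHT : H ≤ T)
    (hpar : ∀ v, s(v, T.parent r v) ∈ H.edgeSet → (H.neighborSet v).ncard ≤ 2) :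
    SpiderForest H := by
  have hbranch : ∀ v, 3 ≤ H.degree v → s(v, T.parent r v) ∉ H.edgeSet := by
    intro v hv hmem
    rw [← card_neighborSet_eq_degree, ← Nat.card_eq_fintype_card, Nat.card_coe_set_eq] at hv
    linarith [hpar v hmem]
  refine ⟨hT.isAcyclic.anti hHT, fun u w hu hw huw => ?_⟩
  by_contra hne
  have := hT.dist_lt_of_reachable r hHT huw hne (hbranch u hu)
  have := hT.dist_lt_of_reachable r hHT huw.symm (Ne.symm hne) (hbranch w hw)
  omega

lemma spiderForest_biUnion [Fintype V] (hP : ∀ j, IsPathEdges T (P j))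
    (hdisj : Pairwise fun j k => Disjoint (P j) (P k)) {S : Finset ι}
    (hS : ∀ j ∈ S, ∀ k ∈ S, ¬ T.HangsFrom r (P k) (P j)) :
    SpiderForest (fromEdgeSet (⋃ j ∈ S, (P j : Set (Sym2 V)))) :=
  hT.spiderForest_of_ncard_neighborSet_le_two r
    (by
      rw [fromEdgeSet_le]
      rintro e ⟨he, -⟩
      obtain ⟨j, -, hj⟩ := Set.mem_iUnion₂.1 he
      exact (hP j).mem_edgeSet hj)
    fun _ => ncard_neighborSet_le_two_of_parent_mem r hP hdisj hS

end IsTree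

end SimpleGraph

theorem edge_disjoint_paths_tree_partition_into_spiders_general
    {V : Type*} [Fintype V] [DecidableEq V] (G₀ : SimpleGraph V) {n : ℕ}
    (P : Fin n → Finset (Sym2 V)) (hP : ∀ j, IsPathEdges G₀ (P j))
    (hdisj : ∀ j k, j ≠ k → Disjoint (P j) (P k))
    (htree : (SimpleGraph.fromEdgeSet (⋃ j, (P j : Set (Sym2 V)))).IsTree) :
    ∃ A : Finset (Fin n),
      SpiderForest (SimpleGraph.fromEdgeSet (⋃ j ∈ A, (P j : Set (Sym2 V)))) ∧
      SpiderForest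
        (SimpleGraph.fromEdgeSet (⋃ j ∈ (Aᶜ : Finset (Fin n)), (P j : Set (Sym2 V)))) := by
  set T := SimpleGraph.fromEdgeSet (⋃ j, (P j : Set (Sym2 V)))
  have hPT : ∀ j, IsPathEdges T (P j) := fun j => (hP j).mono fun e he => by
    rw [SimpleGraph.edgeSet_fromEdgeSet]
    exact ⟨Set.mem_iUnion.2 ⟨j, he⟩, G₀.not_isDiag_of_mem_edgeSet ((hP j).mem_edgeSet he)⟩
  obtain ⟨r⟩ := htree.nonempty
  obtain ⟨c, hc⟩ := exists_bool_ne_of_rel (fun k j => T.HangsFrom r (P k) (P j))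
    (fun j => T.minDepth r (P j)) (fun k j => htree.minDepth_lt_of_hangsFrom r (hPT k) (hPT j))
    fun k k' j h h' => by_contra fun hne =>
      htree.not_disjoint_of_hangsFrom r (hPT j) h h' (hdisj k k' hne)
  refine ⟨Finset.univ.filter (c · = true), htree.spiderForest_biUnion r hPT hdisj ?_,
    htree.spiderForest_biUnion r hPT hdisj ?_⟩ <;>
  · intro j hj k hk h
    exact hc k j h (by simp_all)

/-- If `P 1, …, P n` are pairwise edge-disjoint paths in a finite simple
graph whose union (with the induced vertex set) is a tree, then the index set can be split
into two parts such that, in each part, every connected component of the union of the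
corresponding paths is a spider. -/
theorem edge_disjoint_paths_tree_partition_into_spiders
    {V : Type*} [Fintype V] [DecidableEq V] (G₀ : SimpleGraph V) {n : ℕ}
    (P : Fin n → Finset (Sym2 V)) (hP : ∀ j, IsPathEdges G₀ (P j))
    (hdisj : ∀ j k, j ≠ k → Disjoint (P j) (P k))
    (hcover : ∀ w : V, ∃ j, ∃ e ∈ P j, w ∈ e)
    (htree : (SimpleGraph.fromEdgeSet (⋃ j, (P j : Set (Sym2 V)))).IsTree) :
    ∃ A : Finset (Fin n),
      SpiderForest (SimpleGraph.fromEdgeSet (⋃ j ∈ A, (P j : Set (Sym2 V)))) ∧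
      SpiderForest
        (SimpleGraph.fromEdgeSet (⋃ j ∈ (Aᶜ : Finset (Fin n)), (P j : Set (Sym2 V)))) :=
  edge_disjoint_paths_tree_partition_into_spiders_general G₀ P hP hdisj htree
end
end
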